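/- arXiv:2506.23803 — 6 statements merged into one kernel-verified Lean document; each statement's English description precedes it below -/
import Mathlib

section
/- Let ℋ ⊆ 𝕊 be a linear subspace, let φ : (0,∞) → ℝ be nonnegative, let g₀,…,g_K ∈ ℝ^d, and set S_k := Σ_{i=0}^k gᵢ gᵢᵀ. Suppose there exists a minimizer of H ↦ tr(φ(H)) over ℋ ∩ 𝕊₊₊, and for each k ∈ {0,…,K} let H_k ∈ ℋ ∩ 𝕊₊₊ be a minimizer of H ↦ ⟨H, S_k⟩ + tr(φ(H)) over ℋ ∩ 𝕊₊₊. Then for every k ∈ {0,…,K}: Σ_{i=0}^k ‖gᵢ‖²_{Hᵢ} ≤ ⟨H_k, S_k⟩ + tr(φ(H_k)). -/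
open Matrix MeasureTheory
noncomputable section

/-- Spectral operator function `ψ(A)` of a symmetric (Hermitian) real matrix,
defined via an eigendecomposition; junk value `0` for non-Hermitian input. -/
def matFun {d : ℕ} (ψ : ℝ → ℝ) (A : Matrix (Fin d) (Fin d) ℝ) : Matrix (Fin d) (Fin d) ℝ :=
  if hA : A.IsHermitian then
    (hA.eigenvectorUnitary : Matrix (Fin d) (Fin d) ℝ) *
      Matrix.diagonal (fun i => ψ (hA.eigenvalues i)) *
      star (hA.eigenvectorUnitary : Matrix (Fin d) (Fin d) ℝ)
  else 0

/-- `P` is the orthogonal projection (w.r.t. the trace inner product `⟨A,B⟩ = tr(AB)`)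
onto the subspace `ℋ`. -/
structure IsOrthProj {d : ℕ} (ℋ : Submodule ℝ (Matrix (Fin d) (Fin d) ℝ))
    (P : Matrix (Fin d) (Fin d) ℝ →ₗ[ℝ] Matrix (Fin d) (Fin d) ℝ) : Prop where
  mem : ∀ A, P A ∈ ℋ
  perp : ∀ A, ∀ H ∈ ℋ, Matrix.trace ((A - P A) * H) = 0

/-- Assumption (A1): `ℋ ⊆ 𝕊` is a linear subspace of symmetric matrices, `P` is the
orthogonal projection onto `ℋ`, `P` maps `𝕊₊₊` into `𝕊₊₊`, and `ℋ` is closed under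
operator functions. -/
structure AssumptionA1 {d : ℕ} (ℋ : Submodule ℝ (Matrix (Fin d) (Fin d) ℝ))
    (P : Matrix (Fin d) (Fin d) ℝ →ₗ[ℝ] Matrix (Fin d) (Fin d) ℝ) : Prop where
  symm : ∀ A ∈ ℋ, A.IsHermitian
  proj : IsOrthProj ℋ P
  posdef : ∀ A : Matrix (Fin d) (Fin d) ℝ, A.PosDef → (P A).PosDef
  funClosed : ∀ A ∈ ℋ, ∀ ψ : ℝ → ℝ, matFun ψ A ∈ ℋ

/-- Spectral (operator) norm of a square real matrix. -/
def opNorm {d : ℕ} (A : Matrix (Fin d) (Fin d) ℝ) : ℝ :=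
  ‖Matrix.toEuclideanCLM (𝕜 := ℝ) A‖

/-- The norm `R(x) = ‖P_ℋ(x xᵀ)‖_op^{1/2}`. -/
def Rnorm {d : ℕ} (P : Matrix (Fin d) (Fin d) ℝ →ₗ[ℝ] Matrix (Fin d) (Fin d) ℝ)
    (x : Fin d → ℝ) : ℝ :=
  Real.sqrt (opNorm (P (vecMulVec x x)))

/-- `g` is a subgradient of `f` at `x`. -/
def SubgradAt {d : ℕ} (f : (Fin d → ℝ) → ℝ) (x g : Fin d → ℝ) : Prop :=
  ∀ y, f x + g ⬝ᵥ (y - x) ≤ f y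

lemma trace_matFun {d : ℕ} (ψ : ℝ → ℝ) {A : Matrix (Fin d) (Fin d) ℝ} (hA : A.IsHermitian) :
    Matrix.trace (matFun ψ A) = ∑ i, ψ (hA.eigenvalues i) := by
  rw [matFun, dif_pos hA, Matrix.trace_mul_cycle]
  rw [show star (hA.eigenvectorUnitary : Matrix (Fin d) (Fin d) ℝ) *
      (hA.eigenvectorUnitary : Matrix (Fin d) (Fin d) ℝ) = 1 from ?_]
  · simp [Matrix.trace_diagonal]
  · exact congrArg Subtype.val (Unitary.star_mul_self hA.eigenvectorUnitary)

lemma trace_matFun_nonneg {d : ℕ} {φ : ℝ → ℝ} (hφ : ∀ t > 0, 0 ≤ φ t)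
    {A : Matrix (Fin d) (Fin d) ℝ} (hA : A.PosDef) : 0 ≤ Matrix.trace (matFun φ A) := by
  rw [trace_matFun φ hA.1]
  exact Finset.sum_nonneg fun i _ => hφ _ (hA.eigenvalues_pos i)

lemma dot_eq_trace {d : ℕ} (g : Fin d → ℝ) (H : Matrix (Fin d) (Fin d) ℝ) :
    g ⬝ᵥ (H *ᵥ g) = Matrix.trace (H * vecMulVec g g) := by
  simp only [Matrix.trace, Matrix.diag, Matrix.mul_apply, vecMulVec_apply, dotProduct,
    mulVec, Finset.mul_sum]
  congr 1; ext i; congr 1; ext j; ring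

/-- FTL–BTL lemma (Lemma 1): the adaptively chosen preconditioners satisfy
`Σ_{i≤k} ‖gᵢ‖²_{Hᵢ} ≤ ⟨H_k, S_k⟩ + tr(φ(H_k))`. -/
theorem ftl_btl {d K : ℕ}
    (ℋ : Submodule ℝ (Matrix (Fin d) (Fin d) ℝ))
    (hsymm : ∀ A ∈ ℋ, A.IsHermitian)
    (φ : ℝ → ℝ) (hφ : ∀ t > 0, 0 ≤ φ t)
    (g : ℕ → Fin d → ℝ)
    (S : ℕ → Matrix (Fin d) (Fin d) ℝ)
    (hS : ∀ k, S k = ∑ i ∈ Finset.range (k + 1), vecMulVec (g i) (g i))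
    (hmin : ∃ Hm ∈ ℋ, Hm.PosDef ∧ ∀ H' ∈ ℋ, H'.PosDef →
      Matrix.trace (matFun φ Hm) ≤ Matrix.trace (matFun φ H'))
    (H : ℕ → Matrix (Fin d) (Fin d) ℝ)
    (hH : ∀ k ≤ K, H k ∈ ℋ ∧ (H k).PosDef ∧ ∀ H' ∈ ℋ, H'.PosDef →
      Matrix.trace (H k * S k) + Matrix.trace (matFun φ (H k)) ≤
        Matrix.trace (H' * S k) + Matrix.trace (matFun φ H')) :
    ∀ k ≤ K, ∑ i ∈ Finset.range (k + 1), g i ⬝ᵥ (H i *ᵥ g i) ≤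
      Matrix.trace (H k * S k) + Matrix.trace (matFun φ (H k)) := by
  intro k hk
  induction k with
  | zero =>
    obtain ⟨hmem, hpd, _⟩ := hH 0 hk
    have h0 : Matrix.trace (H 0 * S 0) = g 0 ⬝ᵥ (H 0 *ᵥ g 0) := by
      rw [dot_eq_trace, hS 0, Finset.sum_range_one]
    have := trace_matFun_nonneg hφ hpd
    rw [Finset.sum_range_one]
    linarith
  | succ k ih =>
    have hk' : k ≤ K := Nat.le_of_succ_le hk
    have ihk := ih hk'
    obtain ⟨hmemk, hpdk, hoptk⟩ := hH k hk'
    obtain ⟨hmem, hpd, _⟩ := hH (k + 1) hk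
    have h1 := hoptk _ hmem hpd
    have h3 : Matrix.trace (H (k+1) * S (k+1)) = Matrix.trace (H (k+1) * S k) +
        Matrix.trace (H (k+1) * vecMulVec (g (k+1)) (g (k+1))) := by
      rw [hS (k+1), hS k, Finset.sum_range_succ, mul_add, Matrix.trace_add]
    rw [Finset.sum_range_succ, dot_eq_trace, h3]
    linarith

end
end

section
/- Let ℋ ⊆ 𝕊 satisfy Assumption (A1), let δ, η > 0, let g₀,…,g_K ∈ ℝ^d, and set S_k := Σ_{i=0}^k gᵢ gᵢᵀ. Consider the potential φ(h) := δh + η²/h on (0,∞). Then for each k ∈ {0,…,K} the matrix H_k := η (δ I + P_ℋ(S_k))^{−1/2} is the unique minimizer of H ↦ ⟨H, S_k⟩ + tr(φ(H)) over ℋ ∩ 𝕊₊₊; moreover H_{k+1} ⪯ H_k for every 0 ≤ k < K. -/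
open Matrix MeasureTheory
noncomputable section

namespace MFA

variable {d : ℕ} {A B C D S : Matrix (Fin d) (Fin d) ℝ}

lemma matFun_eq (hA : A.IsHermitian) (ψ : ℝ → ℝ) :
    matFun ψ A = (hA.eigenvectorUnitary : Matrix (Fin d) (Fin d) ℝ) *
      Matrix.diagonal (fun i => ψ (hA.eigenvalues i)) *
      star (hA.eigenvectorUnitary : Matrix (Fin d) (Fin d) ℝ) := dif_pos hA

lemma star_mul_self (hA : A.IsHermitian) :
    star (hA.eigenvectorUnitary : Matrix (Fin d) (Fin d) ℝ) *
      (hA.eigenvectorUnitary : Matrix (Fin d) (Fin d) ℝ) = 1 :=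
  Matrix.mem_unitaryGroup_iff'.mp hA.eigenvectorUnitary.2

lemma mul_star_self (hA : A.IsHermitian) :
    (hA.eigenvectorUnitary : Matrix (Fin d) (Fin d) ℝ) *
      star (hA.eigenvectorUnitary : Matrix (Fin d) (Fin d) ℝ) = 1 :=
  Matrix.mem_unitaryGroup_iff.mp hA.eigenvectorUnitary.2

lemma matFun_congr (hA : A.IsHermitian) {ψ χ : ℝ → ℝ}
    (h : ∀ i, ψ (hA.eigenvalues i) = χ (hA.eigenvalues i)) :
    matFun ψ A = matFun χ A := by
  rw [matFun_eq hA, matFun_eq hA]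
  congr 2
  exact congrArg _ (funext h)

lemma matFun_mul (hA : A.IsHermitian) (ψ χ : ℝ → ℝ) :
    matFun ψ A * matFun χ A = matFun (fun t => ψ t * χ t) A := by
  rw [matFun_eq hA, matFun_eq hA, matFun_eq hA]
  have key : ∀ X : Matrix (Fin d) (Fin d) ℝ,
      star (hA.eigenvectorUnitary : Matrix (Fin d) (Fin d) ℝ) *
        ((hA.eigenvectorUnitary : Matrix (Fin d) (Fin d) ℝ) * X) = X := fun X => by
    rw [← mul_assoc, star_mul_self hA, one_mul]
  simp only [mul_assoc, key]
  congr 1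
  rw [← mul_assoc, Matrix.diagonal_mul_diagonal]

lemma matFun_one (hA : A.IsHermitian) : matFun (fun _ => 1) A = 1 := by
  rw [matFun_eq hA]
  simp [Matrix.diagonal_one, mul_star_self hA]

lemma matFun_isHermitian (hA : A.IsHermitian) (ψ : ℝ → ℝ) :
    (matFun ψ A).IsHermitian := by
  rw [matFun_eq hA]
  unfold Matrix.IsHermitian
  rw [Matrix.conjTranspose_mul, Matrix.conjTranspose_mul, Matrix.diagonal_conjTranspose]
  simp [Matrix.star_eq_conjTranspose, mul_assoc]

lemma matFun_id (hA : A.IsHermitian) : matFun (fun t => t) A = A := by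
  rw [matFun_eq hA]
  convert hA.spectral_theorem.symm using 3
  rw [Unitary.conjStarAlgAut_apply]
  rfl

lemma trace_matFun (hA : A.IsHermitian) (ψ : ℝ → ℝ) :
    (matFun ψ A).trace = ∑ i, ψ (hA.eigenvalues i) := by
  rw [matFun_eq hA, Matrix.trace_mul_cycle, star_mul_self hA, one_mul, Matrix.trace_diagonal]

lemma matFun_posSemidef (hA : A.IsHermitian) {ψ : ℝ → ℝ}
    (h : ∀ i, 0 ≤ ψ (hA.eigenvalues i)) : (matFun ψ A).PosSemidef := by
  rw [matFun_eq hA, Matrix.star_eq_conjTranspose]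
  exact (Matrix.PosSemidef.diagonal h).mul_mul_conjTranspose_same _

lemma matFun_posDef (hA : A.IsHermitian) {ψ : ℝ → ℝ}
    (h : ∀ i, 0 < ψ (hA.eigenvalues i)) : (matFun ψ A).PosDef := by
  refine PosDef.of_dotProduct_mulVec_pos (matFun_isHermitian hA ψ) fun x hx => ?_
  have hU := mul_star_self hA
  set U : Matrix (Fin d) (Fin d) ℝ := (hA.eigenvectorUnitary : Matrix (Fin d) (Fin d) ℝ)
  set y : Fin d → ℝ := star U *ᵥ x with hy
  have hxy : U *ᵥ y = x := by
    rw [hy, Matrix.mulVec_mulVec, hU, Matrix.one_mulVec]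
  have hy0 : y ≠ 0 := by
    intro h0
    rw [h0, Matrix.mulVec_zero] at hxy
    exact hx hxy.symm
  have hexpand : star x ⬝ᵥ (matFun ψ A) *ᵥ x
      = ∑ i, ψ (hA.eigenvalues i) * (y i * y i) := by
    rw [matFun_eq hA]
    rw [← Matrix.mulVec_mulVec, ← Matrix.mulVec_mulVec]
    rw [Matrix.dotProduct_mulVec, ← hy]
    have hsx : star x = x := by ext i; simp
    have hvm : x ᵥ* U = y := by
      rw [hy]; ext i; simp [Matrix.vecMul, Matrix.mulVec, dotProduct,
        Matrix.conjTranspose_apply, mul_comm]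
    rw [hsx, hvm]
    simp [Matrix.mulVec_diagonal, dotProduct, mul_comm, mul_assoc, mul_left_comm]
  rw [hexpand]
  obtain ⟨j, hj⟩ := Function.ne_iff.mp hy0
  refine Finset.sum_pos' (fun i _ => mul_nonneg (h i).le (mul_self_nonneg _))
    ⟨j, Finset.mem_univ j, ?_⟩
  exact mul_pos (h j) (mul_self_pos.mpr (by simpa using hj))

lemma herm_transpose (hA : A.IsHermitian) : Aᵀ = A := by
  ext i j
  rw [Matrix.transpose_apply]
  conv_rhs => rw [← hA]
  simp [Matrix.conjTranspose_apply]

lemma trace_mul_transpose_self_nonneg (B : Matrix (Fin d) (Fin d) ℝ) :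
    0 ≤ (B * Bᵀ).trace := by
  rw [Matrix.trace]
  refine Finset.sum_nonneg fun i _ => ?_
  simp only [Matrix.diag_apply, Matrix.mul_apply, Matrix.transpose_apply]
  exact Finset.sum_nonneg fun j _ => mul_self_nonneg _

lemma eq_zero_of_trace_mul_transpose_self (B : Matrix (Fin d) (Fin d) ℝ)
    (h : (B * Bᵀ).trace = 0) : B = 0 := by
  have hsum : ∑ i, ∑ j, B i j * B i j = 0 := by
    rw [← h, Matrix.trace]
    simp [Matrix.diag_apply, Matrix.mul_apply, Matrix.transpose_apply]
  ext i j
  have h1 : ∀ i ∈ Finset.univ (α := Fin d), (0:ℝ) ≤ ∑ j, B i j * B i j :=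
    fun i _ => Finset.sum_nonneg fun j _ => mul_self_nonneg _
  have h2 := (Finset.sum_eq_zero_iff_of_nonneg h1).mp hsum i (Finset.mem_univ i)
  have h3 : ∀ j ∈ Finset.univ (α := Fin d), (0:ℝ) ≤ B i j * B i j :=
    fun j _ => mul_self_nonneg _
  have := (Finset.sum_eq_zero_iff_of_nonneg h3).mp h2 j (Finset.mem_univ j)
  simpa [mul_self_eq_zero] using this

lemma hermSmul {c : ℝ} (hA : A.IsHermitian) : (c • A).IsHermitian := by
  unfold Matrix.IsHermitian at *
  rw [Matrix.conjTranspose_smul, hA]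
  simp

lemma posSemidef_smul {c : ℝ} (hA : A.PosSemidef) (hc : 0 ≤ c) :
    (c • A).PosSemidef := by
  refine PosSemidef.of_dotProduct_mulVec_nonneg (hermSmul hA.1) fun x => ?_
  rw [Matrix.smul_mulVec, dotProduct_smul]
  exact smul_nonneg hc (hA.dotProduct_mulVec_nonneg x)

lemma posDef_smul {c : ℝ} (hA : A.PosDef) (hc : 0 < c) :
    (c • A).PosDef := by
  refine PosDef.of_dotProduct_mulVec_pos (hermSmul hA.1) fun x hx => ?_
  rw [Matrix.smul_mulVec, dotProduct_smul]
  exact smul_pos hc (hA.dotProduct_mulVec_pos hx)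

lemma posSemidef_vecMulVec (v : Fin d → ℝ) : (Matrix.vecMulVec v v).PosSemidef := by
  refine PosSemidef.of_dotProduct_mulVec_nonneg ?_ ?_
  · unfold Matrix.IsHermitian
    ext i j
    simp [Matrix.vecMulVec_apply, Matrix.conjTranspose_apply, mul_comm]
  · intro x
    have : star x ⬝ᵥ (Matrix.vecMulVec v v) *ᵥ x = (v ⬝ᵥ x) * (v ⬝ᵥ x) := by
      simp [Matrix.vecMulVec_apply, dotProduct, Matrix.mulVec, Finset.sum_mul,
        Finset.mul_sum, mul_comm, mul_assoc, mul_left_comm]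
    rw [this]
    exact mul_self_nonneg _

lemma dot_self_pos {v : Fin d → ℝ} (hv : v ≠ 0) : 0 < v ⬝ᵥ v := by
  obtain ⟨j, hj⟩ := Function.ne_iff.mp hv
  refine Finset.sum_pos' (fun i _ => mul_self_nonneg _) ⟨j, Finset.mem_univ j, ?_⟩
  exact mul_self_pos.mpr (by simpa using hj)

lemma eigBasis_ne_zero (hD : D.IsHermitian) (i : Fin d) :
    (⇑(hD.eigenvectorBasis i) : Fin d → ℝ) ≠ 0 := by
  intro h0
  refine hD.eigenvectorBasis.orthonormal.ne_zero i ?_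
  ext j
  exact congrFun h0 j

lemma symm_dot (hD : D.IsHermitian) (v w : Fin d → ℝ) :
    v ⬝ᵥ (D *ᵥ w) = (D *ᵥ v) ⬝ᵥ w := by
  rw [Matrix.dotProduct_mulVec]
  congr 1
  rw [← Matrix.mulVec_transpose]
  rw [herm_transpose hD]

/-- eigenvalues of a Hermitian `D` are nonneg when `S*D + D*S` is PSD for some PD `S`. -/
lemma eig_nonneg_of_anticomm (hD : D.IsHermitian) (hS : S.PosDef)
    (hPSD : (S * D + D * S).PosSemidef) (i : Fin d) : 0 ≤ hD.eigenvalues i := by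
  set v : Fin d → ℝ := ⇑(hD.eigenvectorBasis i) with hv
  have hv0 : v ≠ 0 := eigBasis_ne_zero hD i
  have hev : D *ᵥ v = hD.eigenvalues i • v := hD.mulVec_eigenvectorBasis i
  have hq : 0 < v ⬝ᵥ (S *ᵥ v) := by
    have := hS.dotProduct_mulVec_pos hv0
    rwa [show star v = v from funext fun _ => rfl] at this
  have h0 := hPSD.dotProduct_mulVec_nonneg v
  rw [show star v = v from funext fun _ => rfl] at h0
  have hexp : v ⬝ᵥ ((S * D + D * S) *ᵥ v)
      = (2 * hD.eigenvalues i) * (v ⬝ᵥ (S *ᵥ v)) := by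
    rw [Matrix.add_mulVec, dotProduct_add, ← Matrix.mulVec_mulVec,
      ← Matrix.mulVec_mulVec, hev]
    rw [Matrix.mulVec_smul, dotProduct_smul]
    rw [symm_dot hD v (S *ᵥ v), hev]
    rw [smul_dotProduct]
    simp only [smul_eq_mul]
    ring
  rw [hexp] at h0
  nlinarith

/-- eigenvalues of Hermitian `C` with `1 - C` PSD are at most `1`. -/
lemma eig_le_one (hC : C.IsHermitian) (hPSD : ((1 : Matrix (Fin d) (Fin d) ℝ) - C).PosSemidef)
    (i : Fin d) : hC.eigenvalues i ≤ 1 := by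
  set v : Fin d → ℝ := ⇑(hC.eigenvectorBasis i) with hv
  have hv0 : v ≠ 0 := eigBasis_ne_zero hC i
  have hev : C *ᵥ v = hC.eigenvalues i • v := hC.mulVec_eigenvectorBasis i
  have h0 := hPSD.dotProduct_mulVec_nonneg v
  rw [show star v = v from funext fun _ => rfl] at h0
  have hexp : v ⬝ᵥ (((1 : Matrix (Fin d) (Fin d) ℝ) - C) *ᵥ v)
      = (1 - hC.eigenvalues i) * (v ⬝ᵥ v) := by
    rw [Matrix.sub_mulVec, dotProduct_sub, Matrix.one_mulVec, hev,
      dotProduct_smul]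
    simp only [smul_eq_mul]
    ring
  rw [hexp] at h0
  have := dot_self_pos hv0
  nlinarith

lemma matFun_sub (hA : A.IsHermitian) (ψ χ : ℝ → ℝ) :
    matFun (fun t => ψ t - χ t) A = matFun ψ A - matFun χ A := by
  rw [matFun_eq hA, matFun_eq hA, matFun_eq hA]
  rw [← Matrix.diagonal_sub, Matrix.mul_sub, Matrix.sub_mul]

lemma psd_conj {N : Matrix (Fin d) (Fin d) ℝ} (hX : A.PosSemidef) (hN : N.IsHermitian) :
    (N * A * N).PosSemidef := by
  have := hX.mul_mul_conjTranspose_same N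
  rwa [show Nᴴ = N from hN] at this

lemma posDef_conj {N W : Matrix (Fin d) (Fin d) ℝ} (hB : B.PosDef) (hN : N.IsHermitian)
    (hW : W * N = 1) : (N * B * N).PosDef := by
  refine PosDef.of_dotProduct_mulVec_pos ((psd_conj hB.posSemidef hN)).1 fun x hx => ?_
  have hy0 : N *ᵥ x ≠ 0 := by
    intro h0
    apply hx
    have : W *ᵥ (N *ᵥ x) = x := by rw [Matrix.mulVec_mulVec, hW, Matrix.one_mulVec]
    rw [h0, Matrix.mulVec_zero] at this
    exact this.symm
  have := hB.dotProduct_mulVec_pos hy0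
  rw [show star (N *ᵥ x) = N *ᵥ x from funext fun _ => rfl] at this
  rw [show star x = x from funext fun _ => rfl]
  rw [← Matrix.mulVec_mulVec, ← Matrix.mulVec_mulVec, symm_dot hN]
  exact this

/-- Monotonicity of the matrix square root. -/
lemma sqrt_mono (hA : A.PosDef) (hB : B.PosDef) (h : (A - B).PosSemidef) :
    (matFun Real.sqrt A - matFun Real.sqrt B).PosSemidef := by
  set X := matFun Real.sqrt A with hXdef
  set Y := matFun Real.sqrt B with hYdef
  have hXh : X.IsHermitian := matFun_isHermitian hA.1 _
  have hYh : Y.IsHermitian := matFun_isHermitian hB.1 _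
  have hX : X.PosDef := matFun_posDef hA.1 (fun i => Real.sqrt_pos.mpr (hA.eigenvalues_pos i))
  have hY : Y.PosDef := matFun_posDef hB.1 (fun i => Real.sqrt_pos.mpr (hB.eigenvalues_pos i))
  have hXX : X * X = A := by
    rw [hXdef, matFun_mul hA.1]
    rw [matFun_congr hA.1 (χ := fun t => t)
      (fun i => Real.mul_self_sqrt (hA.eigenvalues_pos i).le)]
    exact matFun_id hA.1
  have hYY : Y * Y = B := by
    rw [hYdef, matFun_mul hB.1]
    rw [matFun_congr hB.1 (χ := fun t => t)
      (fun i => Real.mul_self_sqrt (hB.eigenvalues_pos i).le)]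
    exact matFun_id hB.1
  have hD : (X - Y).IsHermitian := hXh.sub hYh
  have hSpd : (X + Y).PosDef := hX.add hY
  have hid : (X + Y) * (X - Y) + (X - Y) * (X + Y) = (2:ℝ) • (A - B) := by
    have e1 : (X + Y) * (X - Y) + (X - Y) * (X + Y) = X*X + X*X - (Y*Y + Y*Y) := by
      noncomm_ring
    rw [e1, hXX, hYY, two_smul]
    abel
  refine hD.posSemidef_iff_eigenvalues_nonneg.mpr (fun i => ?_ : ∀ i, 0 ≤ hD.eigenvalues i)
  refine eig_nonneg_of_anticomm hD hSpd ?_ i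
  rw [hid]
  exact posSemidef_smul h (by norm_num)

set_option maxHeartbeats 1000000 in
/-- Antitonicity of the matrix inverse. -/
lemma inv_antitone (hA : A.PosDef) (hB : B.PosDef) (h : (A - B).PosSemidef) :
    (matFun (fun t => t⁻¹) B - matFun (fun t => t⁻¹) A).PosSemidef := by
  set As := matFun Real.sqrt A with hAsdef
  set Ai := matFun (fun t => (Real.sqrt t)⁻¹) A with hAidef
  have hAh := hA.1
  have hAsh : As.IsHermitian := matFun_isHermitian hAh _
  have hAih : Ai.IsHermitian := matFun_isHermitian hAh _
  have hsq : ∀ i, Real.sqrt (hAh.eigenvalues i) ≠ 0 :=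
    fun i => (Real.sqrt_pos.mpr (hA.eigenvalues_pos i)).ne'
  have hAiAs : Ai * As = 1 := by
    rw [hAidef, hAsdef, matFun_mul hAh,
      matFun_congr hAh (χ := fun _ => 1) (fun i => inv_mul_cancel₀ (hsq i)), matFun_one hAh]
  have hAsAi : As * Ai = 1 := by
    rw [hAidef, hAsdef, matFun_mul hAh,
      matFun_congr hAh (χ := fun _ => 1) (fun i => mul_inv_cancel₀ (hsq i)), matFun_one hAh]
  have hAA : As * As = A := by
    rw [hAsdef, matFun_mul hAh,
      matFun_congr hAh (ψ := fun t => Real.sqrt t * Real.sqrt t) (χ := fun t => t)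
        (fun i => Real.mul_self_sqrt (hA.eigenvalues_pos i).le)]
    exact matFun_id hAh
  have hAiAAi : Ai * A * Ai = 1 := by
    calc Ai * A * Ai = Ai * (As * As) * Ai := by rw [hAA]
      _ = (Ai * As) * (As * Ai) := by simp only [mul_assoc]
      _ = 1 := by rw [hAiAs, hAsAi, one_mul]
  set Cm := Ai * B * Ai with hCdef
  have hCpd : Cm.PosDef := posDef_conj hB hAih hAsAi
  have hCh : Cm.IsHermitian := hCpd.1
  have h1C : ((1 : Matrix (Fin d) (Fin d) ℝ) - Cm).PosSemidef := by
    have hconj := psd_conj h hAih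
    have e : Ai * (A - B) * Ai = 1 - Cm := by
      rw [Matrix.mul_sub, Matrix.sub_mul, hCdef, hAiAAi]
    rwa [e] at hconj
  have hkpos : ∀ i, 0 < hCh.eigenvalues i := fun i => hCpd.eigenvalues_pos i
  have hkle : ∀ i, hCh.eigenvalues i ≤ 1 := fun i => eig_le_one hCh h1C i
  set Ci := matFun (fun t => t⁻¹) Cm with hCidef
  have hCiC : Ci * Cm = 1 := by
    have hmm := matFun_mul hCh (fun t => t⁻¹) (fun t => t)
    rw [matFun_id hCh] at hmm
    rw [hCidef, hmm,
      matFun_congr hCh (ψ := fun t => t⁻¹ * t) (χ := fun _ => 1)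
        (fun i => inv_mul_cancel₀ (hkpos i).ne'), matFun_one hCh]
  set Bi := matFun (fun t => t⁻¹) B with hBidef
  have hBBi : B * Bi = 1 := by
    have hmm := matFun_mul hB.1 (fun t => t) (fun t => t⁻¹)
    rw [matFun_id hB.1] at hmm
    rw [hBidef, hmm,
      matFun_congr hB.1 (ψ := fun t => t * t⁻¹) (χ := fun _ => 1)
        (fun i => mul_inv_cancel₀ (hB.eigenvalues_pos i).ne'), matFun_one hB.1]
  have hCD : Cm * (As * Bi * As) = 1 := by
    have e1 : Cm * (As * Bi * As) = Ai * (B * ((Ai * As) * (Bi * As))) := by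
      rw [hCdef]; simp only [mul_assoc]
    rw [e1, hAiAs, one_mul, ← mul_assoc B Bi As, hBBi, one_mul]
    exact hAiAs
  have hCieq : Ci = As * Bi * As := left_inv_eq_right_inv hCiC hCD
  have hCi1 : (Ci - 1).PosSemidef := by
    rw [hCidef, ← matFun_one hCh, ← matFun_sub hCh]
    refine matFun_posSemidef hCh fun i => ?_
    show 0 ≤ (hCh.eigenvalues i)⁻¹ - 1
    have h1 := hkpos i
    have h2 := hkle i
    have h3 : hCh.eigenvalues i * (hCh.eigenvalues i)⁻¹ = 1 := mul_inv_cancel₀ h1.ne'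
    nlinarith [inv_pos.mpr h1]
  have key := psd_conj hCi1 hAih
  have eq2 : Ai * (Ci - 1) * Ai = Bi - matFun (fun t => t⁻¹) A := by
    rw [hCieq, Matrix.mul_sub, Matrix.sub_mul, mul_one]
    congr 1
    · have e3 : Ai * (As * Bi * As) * Ai = (Ai * As) * (Bi * (As * Ai)) := by
        simp only [mul_assoc]
      rw [e3, hAiAs, hAsAi, one_mul, mul_one]
    · rw [hAidef, matFun_mul hAh]
      exact matFun_congr hAh
        (ψ := fun t => (Real.sqrt t)⁻¹ * (Real.sqrt t)⁻¹) (χ := fun t => t⁻¹) fun i => by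
        beta_reduce
        rw [← mul_inv, Real.mul_self_sqrt (hA.eigenvalues_pos i).le]
  rw [hBidef] at eq2
  rwa [eq2] at key

lemma sqrt_inv_eq (hB : B.PosDef) :
    matFun Real.sqrt (matFun (fun t => t⁻¹) B) = matFun (fun t => (Real.sqrt t)⁻¹) B := by
  have hBipd : (matFun (fun t => t⁻¹) B).PosDef :=
    matFun_posDef hB.1 (fun i => inv_pos.mpr (hB.eigenvalues_pos i))
  have h1 : (matFun Real.sqrt (matFun (fun t => t⁻¹) B)).PosSemidef :=
    matFun_posSemidef hBipd.1 (fun i => Real.sqrt_nonneg _)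
  have h2 : (matFun (fun t => (Real.sqrt t)⁻¹) B).PosSemidef :=
    matFun_posSemidef hB.1 (fun i => inv_nonneg.mpr (Real.sqrt_nonneg _))
  open scoped MatrixOrder in
  refine (CFC.sq_eq_sq_iff _ _ (Matrix.nonneg_iff_posSemidef.mpr h1)
    (Matrix.nonneg_iff_posSemidef.mpr h2)).mp ?_
  rw [pow_two, pow_two]
  rw [matFun_mul hBipd.1,
    matFun_congr hBipd.1 (ψ := fun t => Real.sqrt t * Real.sqrt t) (χ := fun t => t)
      (fun i => Real.mul_self_sqrt (hBipd.eigenvalues_pos i).le),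
    matFun_id hBipd.1]
  rw [matFun_mul hB.1,
    matFun_congr hB.1 (ψ := fun t => (Real.sqrt t)⁻¹ * (Real.sqrt t)⁻¹) (χ := fun t => t⁻¹)
      (fun i => by beta_reduce; rw [← mul_inv, Real.mul_self_sqrt (hB.eigenvalues_pos i).le])]

/-- Antitonicity of the inverse matrix square root. -/
lemma invsqrt_antitone (hA : A.PosDef) (hB : B.PosDef) (h : (A - B).PosSemidef) :
    (matFun (fun t => (Real.sqrt t)⁻¹) B - matFun (fun t => (Real.sqrt t)⁻¹) A).PosSemidef := by
  have h1 := inv_antitone hA hB h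
  have hAipd : (matFun (fun t => t⁻¹) A).PosDef :=
    matFun_posDef hA.1 (fun i => inv_pos.mpr (hA.eigenvalues_pos i))
  have hBipd : (matFun (fun t => t⁻¹) B).PosDef :=
    matFun_posDef hB.1 (fun i => inv_pos.mpr (hB.eigenvalues_pos i))
  have h2 := sqrt_mono hBipd hAipd h1
  rwa [sqrt_inv_eq hB, sqrt_inv_eq hA] at h2

lemma rpow_half_eq {M : Matrix (Fin d) (Fin d) ℝ} (hM : M.PosDef) :
    matFun (fun t => t ^ (-(1/2) : ℝ)) M = matFun (fun t => (Real.sqrt t)⁻¹) M :=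
  matFun_congr hM.1 (ψ := fun t => t ^ (-(1/2) : ℝ)) (χ := fun t => (Real.sqrt t)⁻¹) fun i => by
    have hp := hM.eigenvalues_pos i
    beta_reduce
    rw [Real.rpow_neg hp.le, Real.sqrt_eq_rpow]

/-- The core lower bound and uniqueness. -/
lemma core (M H' : Matrix (Fin d) (Fin d) ℝ) (hM : M.PosDef) (hH' : H'.PosDef)
    {η : ℝ} (hη : 0 < η) :
    2 * η * (matFun Real.sqrt M).trace
      ≤ (H' * M).trace + η^2 * (matFun (fun t => t⁻¹) H').trace ∧
    ((H' * M).trace + η^2 * (matFun (fun t => t⁻¹) H').trace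
        = 2 * η * (matFun Real.sqrt M).trace
      → H' = η • matFun (fun t => (Real.sqrt t)⁻¹) M) := by
  have hHh := hH'.1
  have hMh := hM.1
  set X := matFun Real.sqrt H' with hXdef
  set Xi := matFun (fun t => (Real.sqrt t)⁻¹) H' with hXidef
  set R := matFun Real.sqrt M with hRdef
  set Ri := matFun (fun t => (Real.sqrt t)⁻¹) M with hRidef
  have hXt : Xᵀ = X := herm_transpose (matFun_isHermitian hHh _)
  have hXit : Xiᵀ = Xi := herm_transpose (matFun_isHermitian hHh _)
  have hRt : Rᵀ = R := herm_transpose (matFun_isHermitian hMh _)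
  have hXX : X * X = H' := by
    rw [hXdef, matFun_mul hHh,
      matFun_congr hHh (ψ := fun t => Real.sqrt t * Real.sqrt t) (χ := fun t => t)
        (fun i => Real.mul_self_sqrt (hH'.eigenvalues_pos i).le)]
    exact matFun_id hHh
  have hRR : R * R = M := by
    rw [hRdef, matFun_mul hMh,
      matFun_congr hMh (ψ := fun t => Real.sqrt t * Real.sqrt t) (χ := fun t => t)
        (fun i => Real.mul_self_sqrt (hM.eigenvalues_pos i).le)]
    exact matFun_id hMh
  have hXXi : X * Xi = 1 := by
    rw [hXdef, hXidef, matFun_mul hHh,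
      matFun_congr hHh (ψ := fun t => Real.sqrt t * (Real.sqrt t)⁻¹) (χ := fun _ => 1)
        (fun i => mul_inv_cancel₀ (Real.sqrt_pos.mpr (hH'.eigenvalues_pos i)).ne'),
      matFun_one hHh]
  have hXiX : Xi * X = 1 := by
    rw [hXdef, hXidef, matFun_mul hHh,
      matFun_congr hHh (ψ := fun t => (Real.sqrt t)⁻¹ * Real.sqrt t) (χ := fun _ => 1)
        (fun i => inv_mul_cancel₀ (Real.sqrt_pos.mpr (hH'.eigenvalues_pos i)).ne'),
      matFun_one hHh]
  have hRRi : R * Ri = 1 := by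
    rw [hRdef, hRidef, matFun_mul hMh,
      matFun_congr hMh (ψ := fun t => Real.sqrt t * (Real.sqrt t)⁻¹) (χ := fun _ => 1)
        (fun i => mul_inv_cancel₀ (Real.sqrt_pos.mpr (hM.eigenvalues_pos i)).ne'),
      matFun_one hMh]
  have hXiXi : Xi * Xi = matFun (fun t => t⁻¹) H' := by
    rw [hXidef, matFun_mul hHh]
    exact matFun_congr hHh
      (ψ := fun t => (Real.sqrt t)⁻¹ * (Real.sqrt t)⁻¹) (χ := fun t => t⁻¹) fun i => by
      beta_reduce
      rw [← mul_inv, Real.mul_self_sqrt (hH'.eigenvalues_pos i).le]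
  set Bm := X * R - η • Xi with hBdef
  have hBt : Bmᵀ = R * X - η • Xi := by
    rw [hBdef, Matrix.transpose_sub, Matrix.transpose_smul, Matrix.transpose_mul, hXt, hRt, hXit]
  have t1 : (X * R * (R * X)).trace = (H' * M).trace := by
    rw [show X * R * (R * X) = X * (R * R) * X by simp only [mul_assoc], hRR,
      Matrix.trace_mul_cycle, hXX]
  have t2 : (X * R * Xi).trace = R.trace := by
    rw [Matrix.trace_mul_cycle, hXiX, one_mul]
  have t3 : (Xi * (R * X)).trace = R.trace := by
    rw [show Xi * (R * X) = Xi * R * X from (mul_assoc _ _ _).symm, Matrix.trace_mul_cycle,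
      hXXi, one_mul]
  have htrace : (Bm * Bmᵀ).trace
      = (H' * M).trace + η^2 * (matFun (fun t => t⁻¹) H').trace - 2 * η * R.trace := by
    rw [hBt, hBdef]
    simp only [Matrix.sub_mul, Matrix.mul_sub, mul_smul_comm, smul_mul_assoc, smul_smul,
      Matrix.trace_sub, Matrix.trace_smul, smul_eq_mul]
    rw [t1, t2, t3, hXiXi]
    ring
  constructor
  · have h0 := trace_mul_transpose_self_nonneg Bm
    rw [htrace] at h0
    linarith
  · intro heq
    have hB0 : Bm = 0 := by
      refine eq_zero_of_trace_mul_transpose_self Bm ?_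
      rw [htrace, heq]
      ring
    rw [hBdef] at hB0
    have hXR : X * R = η • Xi := sub_eq_zero.mp hB0
    have hH'R : H' * R = η • (1 : Matrix (Fin d) (Fin d) ℝ) := by
      have e1 : X * (X * R) = X * (η • Xi) := by rw [hXR]
      rw [← mul_assoc, hXX, mul_smul_comm, hXXi] at e1
      exact e1
    calc H' = H' * (R * Ri) := by rw [hRRi, mul_one]
      _ = (H' * R) * Ri := (mul_assoc _ _ _).symm
      _ = (η • (1 : Matrix (Fin d) (Fin d) ℝ)) * Ri := by rw [hH'R]
      _ = η • Ri := by rw [smul_mul_assoc, one_mul]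

/-- Value of the objective at the candidate minimizer. -/
lemma core_val (M : Matrix (Fin d) (Fin d) ℝ) (hM : M.PosDef) {η : ℝ} (hη : 0 < η) :
    ((η • matFun (fun t => (Real.sqrt t)⁻¹) M) * M).trace
      + η^2 * (matFun (fun t => t⁻¹) (η • matFun (fun t => (Real.sqrt t)⁻¹) M)).trace
      = 2 * η * (matFun Real.sqrt M).trace := by
  have hMh := hM.1
  set R := matFun Real.sqrt M with hRdef
  set Ri := matFun (fun t => (Real.sqrt t)⁻¹) M with hRidef
  have hRiR : Ri * R = 1 := by
    rw [hRdef, hRidef, matFun_mul hMh,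
      matFun_congr hMh (ψ := fun t => (Real.sqrt t)⁻¹ * Real.sqrt t) (χ := fun _ => 1)
        (fun i => inv_mul_cancel₀ (Real.sqrt_pos.mpr (hM.eigenvalues_pos i)).ne'),
      matFun_one hMh]
  have hG : (η • Ri).PosDef := posDef_smul
    (matFun_posDef hMh (fun i => inv_pos.mpr (Real.sqrt_pos.mpr (hM.eigenvalues_pos i)))) hη
  have hGi : matFun (fun t => t⁻¹) (η • Ri) = η⁻¹ • R := by
    have l1 : matFun (fun t => t⁻¹) (η • Ri) * (η • Ri) = 1 := by
      have hmm := matFun_mul hG.1 (fun t => t⁻¹) (fun t => t)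
      rw [matFun_id hG.1] at hmm
      rw [hmm, matFun_congr hG.1 (ψ := fun t => t⁻¹ * t) (χ := fun _ => 1)
        (fun i => inv_mul_cancel₀ (hG.eigenvalues_pos i).ne'), matFun_one hG.1]
    have l2 : (η • Ri) * (η⁻¹ • R) = 1 := by
      rw [smul_mul_assoc, mul_smul_comm, smul_smul, hRiR, mul_inv_cancel₀ hη.ne', one_smul]
    exact left_inv_eq_right_inv l1 l2
  have hRiM : (Ri * M).trace = R.trace := by
    conv_lhs => rw [show M = matFun (fun t => t) M from (matFun_id hMh).symm]
    rw [hRidef, matFun_mul hMh, trace_matFun hMh, hRdef, trace_matFun hMh]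
    refine Finset.sum_congr rfl fun i _ => ?_
    have hp := hM.eigenvalues_pos i
    rw [inv_mul_eq_iff_eq_mul₀ (Real.sqrt_pos.mpr hp).ne']
    exact (Real.mul_self_sqrt hp.le).symm
  rw [hGi, smul_mul_assoc, Matrix.trace_smul, Matrix.trace_smul, smul_eq_mul, smul_eq_mul,
    hRiM]
  field_simp
  ring

end MFA

/-- Lemma 2: explicit form and monotonicity of the AdaGrad-type preconditioner for the
potential `φ(h) = δh + η²/h`. -/
theorem adagrad_preconditioner_explicit {d K : ℕ}
    (ℋ : Submodule ℝ (Matrix (Fin d) (Fin d) ℝ))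
    (P : Matrix (Fin d) (Fin d) ℝ →ₗ[ℝ] Matrix (Fin d) (Fin d) ℝ)
    (hA1 : AssumptionA1 ℋ P)
    (δ η : ℝ) (hδ : 0 < δ) (hη : 0 < η)
    (g : ℕ → Fin d → ℝ)
    (S : ℕ → Matrix (Fin d) (Fin d) ℝ)
    (hS : ∀ k, S k = ∑ i ∈ Finset.range (k + 1), vecMulVec (g i) (g i))
    (φ : ℝ → ℝ) (hφ : φ = fun h => δ * h + η ^ 2 / h)
    (H : ℕ → Matrix (Fin d) (Fin d) ℝ)
    (hH : ∀ k, H k = η • matFun (fun t => t ^ (-(1 / 2) : ℝ))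
      (δ • (1 : Matrix (Fin d) (Fin d) ℝ) + P (S k))) :
    (∀ k ≤ K, H k ∈ ℋ ∧ (H k).PosDef ∧
      (∀ H' ∈ ℋ, H'.PosDef →
        Matrix.trace (H k * S k) + Matrix.trace (matFun φ (H k)) ≤
          Matrix.trace (H' * S k) + Matrix.trace (matFun φ H')) ∧
      (∀ H' ∈ ℋ, H'.PosDef →
        Matrix.trace (H' * S k) + Matrix.trace (matFun φ H') ≤
          Matrix.trace (H k * S k) + Matrix.trace (matFun φ (H k)) → H' = H k)) ∧
    (∀ k < K, (H k - H (k + 1)).PosSemidef) := by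
  subst hφ
  have h1mem : (1 : Matrix (Fin d) (Fin d) ℝ) ∈ ℋ := by
    have h0 : (0 : Matrix (Fin d) (Fin d) ℝ) ∈ ℋ := Submodule.zero_mem _
    have := hA1.funClosed 0 h0 (fun _ => 1)
    rwa [MFA.matFun_one Matrix.isHermitian_zero] at this
  have hPpsd : ∀ X : Matrix (Fin d) (Fin d) ℝ, X.PosSemidef → (P X).PosSemidef := by
    intro X hX
    have hP1 : (P 1).PosDef := hA1.posdef 1 Matrix.PosDef.one
    refine PosSemidef.of_dotProduct_mulVec_nonneg (hA1.symm _ (hA1.proj.mem X)) fun x => ?_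
    by_contra hneg
    push_neg at hneg
    have hx0 : x ≠ 0 := by
      rintro rfl
      simp at hneg
    have hb : 0 < star x ⬝ᵥ (P 1) *ᵥ x := hP1.dotProduct_mulVec_pos hx0
    set a := star x ⬝ᵥ (P X) *ᵥ x with haa
    set b := star x ⬝ᵥ (P 1) *ᵥ x with hbb
    have hε : 0 < -a / b := div_pos (neg_pos.mpr hneg) hb
    have hPD : (P (X + (-a/b) • 1)).PosDef :=
      hA1.posdef _ (Matrix.PosDef.posSemidef_add hX (MFA.posDef_smul Matrix.PosDef.one hε))
    have hstrict := hPD.dotProduct_mulVec_pos hx0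
    rw [map_add, _root_.map_smul, Matrix.add_mulVec, dotProduct_add,
      Matrix.smul_mulVec, dotProduct_smul, ← haa, ← hbb, smul_eq_mul,
      div_mul_cancel₀ _ hb.ne'] at hstrict
    linarith
  have hSpsd : ∀ k, (S k).PosSemidef := by
    intro k
    rw [hS k]
    exact Finset.sum_induction _ _ (fun a b ha hb => ha.add hb) Matrix.PosSemidef.zero
      (fun i _ => MFA.posSemidef_vecMulVec _)
  set M : ℕ → Matrix (Fin d) (Fin d) ℝ := fun k => δ • 1 + P (S k) with hMdef
  have hMpd : ∀ k, (M k).PosDef := fun k =>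
    (MFA.posDef_smul Matrix.PosDef.one hδ).add_posSemidef (hPpsd _ (hSpsd k))
  have hMmem : ∀ k, M k ∈ ℋ := fun k =>
    Submodule.add_mem _ (Submodule.smul_mem _ _ h1mem) (hA1.proj.mem _)
  have hHeq : ∀ k, H k = η • matFun (fun t => (Real.sqrt t)⁻¹) (M k) := fun k => by
    rw [hH k, MFA.rpow_half_eq (hMpd k)]
  have hHpd : ∀ k, (H k).PosDef := fun k => by
    rw [hHeq k]
    exact MFA.posDef_smul (MFA.matFun_posDef (hMpd k).1 fun i =>
      inv_pos.mpr (Real.sqrt_pos.mpr ((hMpd k).eigenvalues_pos i))) hη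
  have hHmem : ∀ k, H k ∈ ℋ := fun k => by
    rw [hH k]
    exact Submodule.smul_mem _ _ (hA1.funClosed _ (hMmem k) _)
  have bridge : ∀ k, ∀ H' ∈ ℋ, H'.PosDef →
      (H' * S k).trace + (matFun (fun h => δ * h + η ^ 2 / h) H').trace
        = (H' * M k).trace + η^2 * (matFun (fun t => t⁻¹) H').trace := by
    intro k H' hmem hpd
    have e1 : (H' * S k).trace = (H' * P (S k)).trace := by
      have h0 := hA1.proj.perp (S k) H' hmem
      rw [Matrix.sub_mul, Matrix.trace_sub, sub_eq_zero] at h0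
      rw [Matrix.trace_mul_comm, h0, Matrix.trace_mul_comm]
    have e2 : (H' * M k).trace = δ * H'.trace + (H' * P (S k)).trace := by
      show (H' * (δ • 1 + P (S k))).trace = _
      rw [Matrix.mul_add, Matrix.trace_add, mul_smul_comm, Matrix.mul_one,
        Matrix.trace_smul, smul_eq_mul]
    have e3 : (matFun (fun h => δ * h + η ^ 2 / h) H').trace
        = δ * H'.trace + η^2 * (matFun (fun t => t⁻¹) H').trace := by
      rw [MFA.trace_matFun hpd.1, MFA.trace_matFun hpd.1]
      have e4 : H'.trace = ∑ i, hpd.1.eigenvalues i := by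
        conv_lhs => rw [← MFA.matFun_id hpd.1]
        exact MFA.trace_matFun hpd.1 _
      rw [e4, Finset.mul_sum, Finset.mul_sum, ← Finset.sum_add_distrib]
      exact Finset.sum_congr rfl fun i _ => by rw [div_eq_mul_inv]
    rw [e1, e2, e3]
    ring
  have hval : ∀ k, (H k * M k).trace + η^2 * (matFun (fun t => t⁻¹) (H k)).trace
      = 2 * η * (matFun Real.sqrt (M k)).trace := fun k => by
    rw [hHeq k]
    exact MFA.core_val (M k) (hMpd k) hη
  constructor
  · intro k _
    refine ⟨hHmem k, hHpd k, ?_, ?_⟩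
    · intro H' hmem hpd
      rw [bridge k H' hmem hpd, bridge k (H k) (hHmem k) (hHpd k), hval k]
      exact (MFA.core (M k) H' (hMpd k) hpd hη).1
    · intro H' hmem hpd hle
      rw [bridge k H' hmem hpd, bridge k (H k) (hHmem k) (hHpd k), hval k] at hle
      have hge := (MFA.core (M k) H' (hMpd k) hpd hη).1
      have heq := le_antisymm hle hge
      rw [(MFA.core (M k) H' (hMpd k) hpd hη).2 heq, hHeq k]
  · intro k _
    have hdiff : (M (k+1) - M k).PosSemidef := by
      have e : M (k+1) - M k = P (vecMulVec (g (k+1)) (g (k+1))) := by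
        show δ • 1 + P (S (k+1)) - (δ • 1 + P (S k)) = _
        rw [hS (k+1), hS k, Finset.sum_range_succ, map_add]
        abel
      rw [e]
      exact hPpsd _ (MFA.posSemidef_vecMulVec _)
    have h2 := MFA.invsqrt_antitone (hMpd (k+1)) (hMpd k) hdiff
    rw [hHeq k, hHeq (k+1), ← smul_sub]
    exact MFA.posSemidef_smul h2 hη.le

end
end

section
/- Suppose f : ℝ^d → ℝ is convex with minimizer x*, ν ∈ [0,1], L ∈ 𝕊₊₊, and for all x₁, x₂ ∈ ℝ^d and every subgradient ∇f(x₁) ∈ ∂f(x₁): 0 ≤ f(x₂) − f(x₁) − ⟨∇f(x₁), x₂ − x₁⟩ ≤ (1/(1+ν)) (tr L)^{(1−ν)/2} ‖x₂ − x₁‖_L^{1+ν}. Then for every x ∈ ℝ^d and every ∇f(x) ∈ ∂f(x): if ν ∈ (0,1], ‖∇f(x)‖²_{L^{−1}} ≤ ((1+ν)/ν)^{2ν/(1+ν)} (tr L)^{(1−ν)/(1+ν)} (f(x) − f(x*))^{2ν/(1+ν)}; and if ν = 0, ‖∇f(x)‖²_{L^{−1}} ≤ tr L. -/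
open Matrix MeasureTheory
noncomputable section

/-- Lemma 3: gradient-norm bound under matrix Hölder smoothness. -/
theorem grad_bound {d : ℕ}
    (f : (Fin d → ℝ) → ℝ) (hconv : ConvexOn ℝ Set.univ f)
    (xstar : Fin d → ℝ) (hmin : ∀ y, f xstar ≤ f y)
    (ν : ℝ) (hν : ν ∈ Set.Icc (0 : ℝ) 1)
    (L : Matrix (Fin d) (Fin d) ℝ) (hL : L.PosDef)
    (hHolder : ∀ x₁ x₂ g, SubgradAt f x₁ g →
      0 ≤ f x₂ - f x₁ - g ⬝ᵥ (x₂ - x₁) ∧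
      f x₂ - f x₁ - g ⬝ᵥ (x₂ - x₁) ≤
        (1 / (1 + ν)) * Matrix.trace L ^ ((1 - ν) / 2) *
          Real.sqrt ((x₂ - x₁) ⬝ᵥ (L *ᵥ (x₂ - x₁))) ^ (1 + ν)) :
    ∀ x g, SubgradAt f x g →
      (0 < ν → g ⬝ᵥ (L⁻¹ *ᵥ g) ≤
        ((1 + ν) / ν) ^ (2 * ν / (1 + ν)) * Matrix.trace L ^ ((1 - ν) / (1 + ν)) *
          (f x - f xstar) ^ (2 * ν / (1 + ν))) ∧
      (ν = 0 → g ⬝ᵥ (L⁻¹ *ᵥ g) ≤ Matrix.trace L) := by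

  intro x g hg
  obtain ⟨hν0, hν1⟩ := hν
  have hν1p : (0:ℝ) < 1 + ν := by linarith
  set s : ℝ := g ⬝ᵥ (L⁻¹ *ᵥ g) with hs_def
  have hLinv : (L⁻¹).PosDef := hL.inv
  have hs_nonneg : 0 ≤ s := by
    have := hLinv.posSemidef.dotProduct_mulVec_nonneg g
    simpa [hs_def] using this
  have hD : 0 ≤ f x - f xstar := sub_nonneg.2 (hmin x)
  have htr_nonneg : 0 ≤ Matrix.trace L := by
    have h1 : ∀ i, 0 ≤ L i i := by
      intro i
      have := hL.posSemidef.dotProduct_mulVec_nonneg (Pi.single i 1)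
      simpa [dotProduct, Matrix.mulVec, Pi.single_apply] using this
    rw [Matrix.trace]
    exact Finset.sum_nonneg fun i _ => h1 i
  -- the key inequality from the Hölder bound and minimality
  have key : ∀ t : ℝ, 0 ≤ t →
      t * s ≤ (f x - f xstar) +
        (1 / (1 + ν)) * Matrix.trace L ^ ((1 - ν) / 2) * (t * Real.sqrt s) ^ (1 + ν) := by
    intro t ht
    have h2 := (hHolder x (x - t • (L⁻¹ *ᵥ g)) g hg).2
    have hLLinv : L * L⁻¹ = 1 := Matrix.mul_nonsing_inv L hL.det_pos.ne'.isUnit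
    have hdiff : (x - t • (L⁻¹ *ᵥ g)) - x = (-t) • (L⁻¹ *ᵥ g) := by
      rw [sub_sub_cancel_left, neg_smul]
    have hdot : g ⬝ᵥ ((x - t • (L⁻¹ *ᵥ g)) - x) = -t * s := by
      rw [hdiff, dotProduct_smul]
      simp [hs_def, smul_eq_mul]
    have hquad : ((x - t • (L⁻¹ *ᵥ g)) - x) ⬝ᵥ (L *ᵥ ((x - t • (L⁻¹ *ᵥ g)) - x)) = t ^ 2 * s := by
      rw [hdiff, Matrix.mulVec_smul, smul_dotProduct, dotProduct_smul,
        Matrix.mulVec_mulVec, hLLinv, Matrix.one_mulVec,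
        dotProduct_comm (L⁻¹ *ᵥ g) g]
      simp only [smul_eq_mul, ← hs_def]
      ring
    have hsqrt : Real.sqrt (((x - t • (L⁻¹ *ᵥ g)) - x) ⬝ᵥ (L *ᵥ ((x - t • (L⁻¹ *ᵥ g)) - x)))
        = t * Real.sqrt s := by
      rw [hquad, Real.sqrt_mul (sq_nonneg t), Real.sqrt_sq ht]
    rw [hdot, hsqrt] at h2
    have h3 := hmin (x - t • (L⁻¹ *ᵥ g))
    linarith
  constructor
  · -- case 0 < ν
    intro hν0'
    rcases eq_or_lt_of_le hs_nonneg with hs0 | hs0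
    · rw [← hs0]
      have h1 : (0:ℝ) ≤ ((1 + ν) / ν) ^ (2 * ν / (1 + ν)) :=
        Real.rpow_nonneg (by positivity) _
      have h2 : (0:ℝ) ≤ Matrix.trace L ^ ((1 - ν) / (1 + ν)) :=
        Real.rpow_nonneg htr_nonneg _
      have h3 : (0:ℝ) ≤ (f x - f xstar) ^ (2 * ν / (1 + ν)) := Real.rpow_nonneg hD _
      positivity
    · -- s > 0
      have hgne : g ≠ 0 := by
        intro hg0
        rw [hs_def, hg0] at hs0
        simp at hs0
      obtain ⟨i, _⟩ := Function.ne_iff.mp hgne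
      have htr : 0 < Matrix.trace L := by
        have h1 : ∀ j, 0 < L j j := by
          intro j
          have := hL.dotProduct_mulVec_pos (x := Pi.single j 1) (by
            intro hcontra
            have := congrFun hcontra j
            simp [Pi.single_apply] at this)
          simpa [dotProduct, Matrix.mulVec, Pi.single_apply] using this
        rw [Matrix.trace]
        exact Finset.sum_pos (fun j _ => h1 j) ⟨i, Finset.mem_univ i⟩
      set S : ℝ := Real.sqrt s with hS_def
      have hSpos : 0 < S := Real.sqrt_pos.2 hs0
      have hSsq : S ^ (2:ℝ) = s := by
        rw [show (2:ℝ) = ((2:ℕ):ℝ) by norm_num, Real.rpow_natCast, Real.sq_sqrt hs_nonneg]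
      set T : ℝ := Matrix.trace L ^ ((1 - ν) / 2) with hT_def
      have hTpos : 0 < T := Real.rpow_pos_of_pos htr _
      set t : ℝ := S ^ ((1 - ν) / ν) * T ^ (-(1 / ν)) with ht_def
      have htpos : 0 < t := by positivity
      set M : ℝ := S ^ ((1 + ν) / ν) * T ^ (-(1 / ν)) with hM_def
      have hMpos : 0 < M := by positivity
      have hνne : ν ≠ 0 := hν0'.ne'
      have c1 : t * s = M := by
        rw [← hSsq, ht_def, hM_def, mul_right_comm, ← Real.rpow_add hSpos]
        congr 2
        field_simp
        ring
      have c2 : (1 / (1 + ν)) * T * (t * S) ^ (1 + ν) = (1 / (1 + ν)) * M := by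
        have htS : t * S = S ^ (1 / ν) * T ^ (-(1 / ν)) := by
          rw [ht_def, mul_right_comm, ← Real.rpow_add_one hSpos.ne' ((1 - ν) / ν)]
          congr 2
          field_simp
          ring
        have h4 : (t * S) ^ (1 + ν) = S ^ ((1 + ν) / ν) * T ^ (-((1 + ν) / ν)) := by
          rw [htS, Real.mul_rpow (Real.rpow_nonneg hSpos.le _) (Real.rpow_nonneg hTpos.le _),
            ← Real.rpow_mul hSpos.le, ← Real.rpow_mul hTpos.le]
          congr 2
          · field_simp
          · field_simp
            try ring
        have h5 : T * T ^ (-((1 + ν) / ν)) = T ^ (-(1 / ν)) := by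
          nth_rewrite 1 [← Real.rpow_one T]
          rw [← Real.rpow_add hTpos]
          congr 1
          field_simp
          try ring
        calc (1 / (1 + ν)) * T * (t * S) ^ (1 + ν)
            = (1 / (1 + ν)) * (T * T ^ (-((1 + ν) / ν))) * S ^ ((1 + ν) / ν) := by
              rw [h4]; ring
          _ = (1 / (1 + ν)) * M := by rw [h5, hM_def]; ring
      have hkey := key t htpos.le
      rw [c1, c2] at hkey
      have hDM : ν / (1 + ν) * M ≤ f x - f xstar := by
        have he : M - (1 / (1 + ν)) * M = ν / (1 + ν) * M := by
          field_simp
          try ring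
        linarith
      set p : ℝ := 2 * ν / (1 + ν) with hp_def
      have hp_pos : 0 < p := by positivity
      have hlhs_nonneg : 0 ≤ ν / (1 + ν) * M := by positivity
      have hrp := Real.rpow_le_rpow hlhs_nonneg hDM hp_pos.le
      have hMp : M ^ p = s * Matrix.trace L ^ (-((1 - ν) / (1 + ν))) := by
        rw [hM_def, Real.mul_rpow (Real.rpow_nonneg hSpos.le _) (Real.rpow_nonneg hTpos.le _),
          ← Real.rpow_mul hSpos.le, ← Real.rpow_mul hTpos.le, hT_def,
          ← Real.rpow_mul htr_nonneg]
        congr 1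
        · rw [← hSsq]
          congr 1
          rw [hp_def]
          field_simp
          try ring
        · congr 1
          rw [hp_def]
          field_simp
          try ring
      have hMul : (ν / (1 + ν) * M) ^ p
          = (ν / (1 + ν)) ^ p * (s * Matrix.trace L ^ (-((1 - ν) / (1 + ν)))) := by
        rw [Real.mul_rpow (by positivity) hMpos.le, hMp]
      rw [hMul] at hrp
      have hE : ((1 + ν) / ν) ^ p * Matrix.trace L ^ ((1 - ν) / (1 + ν)) *
          ((ν / (1 + ν)) ^ p * (s * Matrix.trace L ^ (-((1 - ν) / (1 + ν))))) = s := by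
        have e1 : ((1 + ν) / ν) ^ p * (ν / (1 + ν)) ^ p = 1 := by
          rw [← Real.mul_rpow (by positivity) (by positivity), div_mul_div_comm,
            mul_comm (1 + ν) ν, div_self (by positivity)]
          exact Real.one_rpow p
        have e2 : Matrix.trace L ^ ((1 - ν) / (1 + ν)) *
            Matrix.trace L ^ (-((1 - ν) / (1 + ν))) = 1 := by
          rw [← Real.rpow_add htr]
          simp
        calc ((1 + ν) / ν) ^ p * Matrix.trace L ^ ((1 - ν) / (1 + ν)) *
            ((ν / (1 + ν)) ^ p * (s * Matrix.trace L ^ (-((1 - ν) / (1 + ν)))))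
            = (((1 + ν) / ν) ^ p * (ν / (1 + ν)) ^ p) *
              (Matrix.trace L ^ ((1 - ν) / (1 + ν)) *
                Matrix.trace L ^ (-((1 - ν) / (1 + ν)))) * s := by ring
          _ = s := by rw [e1, e2]; ring
      calc s = ((1 + ν) / ν) ^ p * Matrix.trace L ^ ((1 - ν) / (1 + ν)) *
            ((ν / (1 + ν)) ^ p * (s * Matrix.trace L ^ (-((1 - ν) / (1 + ν))))) := hE.symm
        _ ≤ ((1 + ν) / ν) ^ p * Matrix.trace L ^ ((1 - ν) / (1 + ν)) * (f x - f xstar) ^ p := by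
            apply mul_le_mul_of_nonneg_left hrp
            positivity
  · -- case ν = 0
    intro hν0'
    subst hν0'
    by_contra hcontra
    push_neg at hcontra
    set S : ℝ := Real.sqrt s with hS_def
    set T : ℝ := Real.sqrt (Matrix.trace L) with hT_def
    have hT_nonneg : 0 ≤ T := Real.sqrt_nonneg _
    have hTS : T < S := by
      rw [hS_def, hT_def]
      exact Real.sqrt_lt_sqrt htr_nonneg hcontra
    have hSpos : 0 < S := lt_of_le_of_lt hT_nonneg hTS
    have hSsq : S * S = s := Real.mul_self_sqrt hs_nonneg
    set D : ℝ := f x - f xstar with hD_def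
    set t : ℝ := (D + 1) / ((S - T) * S) with ht_def
    have htpos : 0 < t := by
      apply div_pos (by linarith) (by nlinarith)
    have hkey := key t htpos.le
    have hrw : Matrix.trace L ^ ((1 - (0:ℝ)) / 2) = T := by
      rw [hT_def, Real.sqrt_eq_rpow]
      norm_num
    rw [hrw] at hkey
    have hrw2 : (t * Real.sqrt s) ^ ((1:ℝ) + 0) = t * S := by
      rw [← hS_def]
      norm_num
    rw [hrw2] at hkey
    have h6 : t * s = t * S * S := by rw [← hSsq]; ring
    rw [h6] at hkey
    norm_num at hkey
    have hfinal : t * S * (S - T) ≤ D := by nlinarith [hkey]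
    have hST : 0 < (S - T) * S := mul_pos (sub_pos.2 hTS) hSpos
    have heq0 : t * ((S - T) * S) = D + 1 := div_mul_cancel₀ _ hST.ne'
    have heq : t * S * (S - T) = D + 1 := by rw [← heq0]; ring
    linarith


end
end

section
/- Let ℋ ⊆ 𝕊 satisfy Assumption (A1). Then the function R : ℝ^d → ℝ defined by R(x) := ‖P_ℋ(x xᵀ)‖_op^{1/2} is a norm on ℝ^d: it is nonnegative, absolutely homogeneous, subadditive, and R(x) = 0 implies x = 0. -/
open Matrix MeasureTheory
noncomputable section

section RnormHelpers

variable {d : ℕ}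

private lemma dot_self_nonneg' (v : Fin d → ℝ) : 0 ≤ v ⬝ᵥ v :=
  Finset.sum_nonneg fun _ _ => mul_self_nonneg _

private lemma norm_symm_eq (v : Fin d → ℝ) :
    ‖(WithLp.equiv 2 (Fin d → ℝ)).symm v‖ = Real.sqrt (v ⬝ᵥ v) := by
  rw [EuclideanSpace.norm_eq]
  congr 1
  simp [dotProduct, WithLp.equiv_symm_apply, PiLp.toLp_apply, Real.norm_eq_abs, sq_abs, sq]

private lemma inner_symm_eq (u w : Fin d → ℝ) :
    (inner ℝ ((WithLp.equiv 2 (Fin d → ℝ)).symm u) ((WithLp.equiv 2 (Fin d → ℝ)).symm w) : ℝ)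
      = u ⬝ᵥ w := by
  simp [PiLp.inner_apply, WithLp.equiv_symm_apply, PiLp.toLp_apply, dotProduct, RCLike.inner_apply, mul_comm]

private lemma quad_symm {A : Matrix (Fin d) (Fin d) ℝ} (hA : A.IsHermitian) (u v : Fin d → ℝ) :
    u ⬝ᵥ (A *ᵥ v) = v ⬝ᵥ (A *ᵥ u) := by
  rw [dotProduct_mulVec, ← mulVec_transpose,
    show Aᵀ = A from by rw [← Matrix.conjTranspose_eq_transpose_of_trivial]; exact hA]
  exact dotProduct_comm _ _

private lemma toEuclideanCLM_piLp_equiv_symm (A : Matrix (Fin d) (Fin d) ℝ) (v : Fin d → ℝ) :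
    Matrix.toEuclideanCLM (𝕜 := ℝ) A ((WithLp.equiv 2 (Fin d → ℝ)).symm v)
      = (WithLp.equiv 2 (Fin d → ℝ)).symm (Matrix.toLin' A v) := rfl

private lemma quad_le_opNorm (A : Matrix (Fin d) (Fin d) ℝ) (v : Fin d → ℝ) :
    v ⬝ᵥ (A *ᵥ v) ≤ opNorm A * (v ⬝ᵥ v) := by
  set z := (WithLp.equiv 2 (Fin d → ℝ)).symm v with hz
  have h1 : (inner ℝ z (Matrix.toEuclideanCLM (𝕜 := ℝ) A z) : ℝ)
      ≤ ‖z‖ * ‖Matrix.toEuclideanCLM (𝕜 := ℝ) A z‖ := real_inner_le_norm _ _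
  have h2 : ‖Matrix.toEuclideanCLM (𝕜 := ℝ) A z‖ ≤ opNorm A * ‖z‖ :=
    ContinuousLinearMap.le_opNorm _ _
  have h3 : (inner ℝ z (Matrix.toEuclideanCLM (𝕜 := ℝ) A z) : ℝ) = v ⬝ᵥ (A *ᵥ v) := by
    rw [hz, toEuclideanCLM_piLp_equiv_symm, inner_symm_eq, Matrix.toLin'_apply]
  have h4 : ‖z‖ * ‖z‖ = v ⬝ᵥ v := by
    rw [hz, norm_symm_eq, Real.mul_self_sqrt (dot_self_nonneg' v)]
  calc v ⬝ᵥ (A *ᵥ v) = _ := h3.symm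
    _ ≤ ‖z‖ * ‖Matrix.toEuclideanCLM (𝕜 := ℝ) A z‖ := h1
    _ ≤ ‖z‖ * (opNorm A * ‖z‖) := mul_le_mul_of_nonneg_left h2 (norm_nonneg z)
    _ = opNorm A * (v ⬝ᵥ v) := by rw [← h4]; ring

private lemma quad_cs {A : Matrix (Fin d) (Fin d) ℝ} (hA : A.IsHermitian)
    (h0 : ∀ v, 0 ≤ v ⬝ᵥ (A *ᵥ v)) (u v : Fin d → ℝ) :
    (u ⬝ᵥ (A *ᵥ v)) ^ 2 ≤ (u ⬝ᵥ (A *ᵥ u)) * (v ⬝ᵥ (A *ᵥ v)) := by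
  have key := discrim_le_zero (a := v ⬝ᵥ (A *ᵥ v)) (b := 2 * (u ⬝ᵥ (A *ᵥ v)))
      (c := u ⬝ᵥ (A *ᵥ u)) ?_
  · rw [discrim] at key; nlinarith [key]
  · intro t
    have h := h0 (u + t • v)
    have hs := quad_symm hA v u
    simp only [mulVec_add, mulVec_smul, add_dotProduct, dotProduct_add, smul_dotProduct,
      dotProduct_smul, smul_eq_mul] at h
    rw [hs] at h
    nlinarith [h]

private lemma opNorm_le_of_quad {A : Matrix (Fin d) (Fin d) ℝ} (hA : A.IsHermitian)
    (h0 : ∀ v, 0 ≤ v ⬝ᵥ (A *ᵥ v)) {c : ℝ} (hc : 0 ≤ c)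
    (h : ∀ v, v ⬝ᵥ (A *ᵥ v) ≤ c * (v ⬝ᵥ v)) : opNorm A ≤ c := by
  refine ContinuousLinearMap.opNorm_le_bound _ hc fun z => ?_
  set v : Fin d → ℝ := WithLp.equiv 2 _ z with hv
  have hz : z = (WithLp.equiv 2 (Fin d → ℝ)).symm v := by simp [hv]
  rw [hz, toEuclideanCLM_piLp_equiv_symm, norm_symm_eq, norm_symm_eq, Matrix.toLin'_apply]
  have key : (A *ᵥ v) ⬝ᵥ (A *ᵥ v) ≤ c ^ 2 * (v ⬝ᵥ v) := by
    have cs := quad_cs hA h0 (A *ᵥ v) v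
    rcases eq_or_lt_of_le (dot_self_nonneg' (A *ᵥ v)) with h1 | h1
    · nlinarith [dot_self_nonneg' v, sq_nonneg c]
    · have step : ((A *ᵥ v) ⬝ᵥ (A *ᵥ v)) ^ 2 ≤ (c * ((A *ᵥ v) ⬝ᵥ (A *ᵥ v))) * (c * (v ⬝ᵥ v)) :=
        le_trans cs (mul_le_mul (h (A *ᵥ v)) (h v) (h0 v)
          (mul_nonneg hc (dot_self_nonneg' (A *ᵥ v))))
      nlinarith [step, h1]
  calc Real.sqrt ((A *ᵥ v) ⬝ᵥ (A *ᵥ v)) ≤ Real.sqrt (c ^ 2 * (v ⬝ᵥ v)) := Real.sqrt_le_sqrt key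
  _ = c * Real.sqrt (v ⬝ᵥ v) := by rw [Real.sqrt_mul (sq_nonneg c), Real.sqrt_sq hc]

private lemma vecMulVec_quad (x v : Fin d → ℝ) :
    v ⬝ᵥ (vecMulVec x x *ᵥ v) = (x ⬝ᵥ v) * (x ⬝ᵥ v) := by
  simp only [mulVec, dotProduct, vecMulVec_apply]
  rw [Finset.sum_mul_sum]
  simp only [Finset.mul_sum]
  exact Finset.sum_congr rfl fun i _ => Finset.sum_congr rfl fun j _ => by ring

private lemma vecMulVec_herm (x y : Fin d → ℝ) :
    (vecMulVec x y + vecMulVec y x).IsHermitian := by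
  ext i j
  simp [Matrix.conjTranspose_apply, vecMulVec_apply, Matrix.add_apply, mul_comm, add_comm]

private lemma vecMulVec_pd {x : Fin d → ℝ} {ε : ℝ} (hε : 0 < ε) :
    (vecMulVec x x + ε • 1).PosDef := by
  rw [posDef_iff_dotProduct_mulVec]
  constructor
  · ext i j
    simp [Matrix.conjTranspose_apply, vecMulVec_apply, Matrix.add_apply, Matrix.smul_apply,
      Matrix.one_apply, mul_comm]
    split <;> simp_all [eq_comm]
  · intro v hv
    have hvv : 0 < v ⬝ᵥ v :=
      lt_of_le_of_ne (dot_self_nonneg' v) (Ne.symm (fun h => hv (dotProduct_self_eq_zero.mp h)))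
    have : v ⬝ᵥ ((vecMulVec x x + ε • 1) *ᵥ v) = (x ⬝ᵥ v) * (x ⬝ᵥ v) + ε * (v ⬝ᵥ v) := by
      rw [add_mulVec, dotProduct_add, vecMulVec_quad, smul_mulVec, one_mulVec,
        dotProduct_smul, smul_eq_mul]
    rw [star_trivial, this]
    nlinarith [mul_self_nonneg (x ⬝ᵥ v)]

private lemma proj_quad_nonneg {ℋ : Submodule ℝ (Matrix (Fin d) (Fin d) ℝ)}
    {P : Matrix (Fin d) (Fin d) ℝ →ₗ[ℝ] Matrix (Fin d) (Fin d) ℝ}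
    (hA1 : AssumptionA1 ℋ P) (x v : Fin d → ℝ) :
    0 ≤ v ⬝ᵥ (P (vecMulVec x x) *ᵥ v) := by
  rcases eq_or_ne v 0 with rfl | hv
  · simp
  have h1 : (P 1).PosDef := hA1.posdef 1 Matrix.PosDef.one
  have hq1 : 0 < v ⬝ᵥ (P 1 *ᵥ v) := by
    have := h1.dotProduct_mulVec_pos hv
    rwa [star_trivial] at this
  by_contra hneg
  push_neg at hneg
  set q := v ⬝ᵥ (P (vecMulVec x x) *ᵥ v) with hqdef
  set ε := -q / (v ⬝ᵥ (P 1 *ᵥ v)) with hε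
  have hεpos : 0 < ε := div_pos (neg_pos.mpr hneg) hq1
  have hpd : (vecMulVec x x + ε • 1).PosDef := vecMulVec_pd hεpos
  have h2 := (hA1.posdef _ hpd).dotProduct_mulVec_pos hv
  rw [star_trivial, map_add, P.map_smul, add_mulVec, smul_mulVec, dotProduct_add,
    dotProduct_smul, smul_eq_mul] at h2
  have hcancel : ε * (v ⬝ᵥ (P 1 *ᵥ v)) = -q := by
    rw [hε, div_mul_cancel₀ _ hq1.ne']
  rw [← hqdef, hcancel] at h2
  linarith

private lemma trace_vecMulVec_mul {x : Fin d → ℝ} {H : Matrix (Fin d) (Fin d) ℝ}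
    (hH : H.IsHermitian) :
    Matrix.trace (vecMulVec x x * H) = x ⬝ᵥ (H *ᵥ x) := by
  have hsym : ∀ i j, H j i = H i j := fun i j => by
    simpa using congrFun (congrFun hH i) j
  simp only [Matrix.trace, Matrix.diag, Matrix.mul_apply, vecMulVec_apply, dotProduct, mulVec]
  refine Finset.sum_congr rfl fun i _ => ?_
  rw [Finset.mul_sum]
  refine Finset.sum_congr rfl fun j _ => ?_
  rw [hsym i j]
  ring

private lemma vecMulVec_expand (x y : Fin d → ℝ) (t : ℝ) :
    vecMulVec (x + t • y) (x + t • y) =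
      vecMulVec x x + t • (vecMulVec x y + vecMulVec y x) + (t * t) • vecMulVec y y := by
  ext i j
  simp only [vecMulVec_apply, Matrix.add_apply, Matrix.smul_apply, Pi.add_apply, Pi.smul_apply,
    smul_eq_mul]
  ring

set_option synthInstance.maxHeartbeats 1000000 in
private lemma opNorm_smul' (c : ℝ) (A : Matrix (Fin d) (Fin d) ℝ) (hc : 0 ≤ c) :
    opNorm (c • A) = c * opNorm A := by
  have hsm : Matrix.toEuclideanCLM (𝕜 := ℝ) (c • A)
      = c • Matrix.toEuclideanCLM (𝕜 := ℝ) A := map_smul _ _ _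
  rw [opNorm, opNorm, hsm, norm_smul c (Matrix.toEuclideanCLM (𝕜 := ℝ) A), Real.norm_eq_abs, abs_of_nonneg hc]

end RnormHelpers

/-- Lemma 4: `R(x) = ‖P_ℋ(x xᵀ)‖_op^{1/2}` is a norm on `ℝ^d`. -/
theorem Rnorm_is_norm {d : ℕ}
    (ℋ : Submodule ℝ (Matrix (Fin d) (Fin d) ℝ))
    (P : Matrix (Fin d) (Fin d) ℝ →ₗ[ℝ] Matrix (Fin d) (Fin d) ℝ)
    (hA1 : AssumptionA1 ℋ P) :
    (∀ x : Fin d → ℝ, 0 ≤ Rnorm P x) ∧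
    (∀ (t : ℝ) (x : Fin d → ℝ), Rnorm P (t • x) = |t| * Rnorm P x) ∧
    (∀ x y : Fin d → ℝ, Rnorm P (x + y) ≤ Rnorm P x + Rnorm P y) ∧
    (∀ x : Fin d → ℝ, Rnorm P x = 0 → x = 0) := by
  have hHerm : ∀ A, (P A).IsHermitian := fun A => hA1.symm _ (hA1.proj.mem A)
  refine ⟨fun x => Real.sqrt_nonneg _, ?_, ?_, ?_⟩
  · -- homogeneity
    intro t x
    have hv : vecMulVec (t • x) (t • x) = (t * t) • vecMulVec x x := by
      ext i j
      simp only [vecMulVec_apply, Matrix.smul_apply, Pi.smul_apply, smul_eq_mul]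
      ring
    have hop : opNorm ((t * t) • P (vecMulVec x x)) = (t * t) * opNorm (P (vecMulVec x x)) :=
      opNorm_smul' _ _ (mul_self_nonneg t)
    rw [Rnorm, Rnorm, hv, P.map_smul, hop, Real.sqrt_mul (mul_self_nonneg t),
      Real.sqrt_mul_self_eq_abs]
  · -- triangle inequality
    intro x y
    set A := P (vecMulVec x x) with hAdef
    set B := P (vecMulVec y y) with hBdef
    set M := P (vecMulVec x y + vecMulVec y x) with hMdef
    have hf : ∀ (t : ℝ) (v : Fin d → ℝ),
        0 ≤ v ⬝ᵥ (A *ᵥ v) + t * (v ⬝ᵥ (M *ᵥ v)) + t * t * (v ⬝ᵥ (B *ᵥ v)) := by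
      intro t v
      have h := proj_quad_nonneg hA1 (x + t • y) v
      rw [vecMulVec_expand, map_add, map_add, P.map_smul, P.map_smul] at h
      rw [add_mulVec, add_mulVec, smul_mulVec, smul_mulVec, dotProduct_add,
        dotProduct_add, dotProduct_smul, dotProduct_smul, smul_eq_mul, smul_eq_mul] at h
      rw [← hAdef, ← hBdef, ← hMdef] at h
      linarith
    have hC : P (vecMulVec (x + y) (x + y)) = A + M + B := by
      have h := vecMulVec_expand x y 1
      simp only [one_smul, one_mul] at h
      rw [h, map_add, map_add, hAdef, hBdef, hMdef]
    have key : ∀ v, v ⬝ᵥ (P (vecMulVec (x + y) (x + y)) *ᵥ v)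
        ≤ (Rnorm P x + Rnorm P y) ^ 2 * (v ⬝ᵥ v) := by
      intro v
      have hA0 := proj_quad_nonneg hA1 x v
      have hB0 := proj_quad_nonneg hA1 y v
      set qA := v ⬝ᵥ (A *ᵥ v) with hqA
      set qB := v ⬝ᵥ (B *ᵥ v) with hqB
      set qM := v ⬝ᵥ (M *ᵥ v) with hqM
      have hdisc := discrim_le_zero (a := qB) (b := qM) (c := qA) (fun t => by
        have := hf t v; nlinarith [this])
      rw [discrim] at hdisc
      have hM : qM ≤ 2 * Real.sqrt qA * Real.sqrt qB := by
        have h4 : qM ^ 2 ≤ 4 * (qA * qB) := by nlinarith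
        calc qM ≤ |qM| := le_abs_self _
          _ = Real.sqrt (qM ^ 2) := (Real.sqrt_sq_eq_abs qM).symm
          _ ≤ Real.sqrt (4 * (qA * qB)) := Real.sqrt_le_sqrt h4
          _ = 2 * Real.sqrt (qA * qB) := by
              rw [show (4 : ℝ) * (qA * qB) = 2 ^ 2 * (qA * qB) by norm_num,
                Real.sqrt_mul (sq_nonneg 2), Real.sqrt_sq (by norm_num : (0:ℝ) ≤ 2)]
          _ = 2 * Real.sqrt qA * Real.sqrt qB := by rw [Real.sqrt_mul hA0]; ring
      have hAle : Real.sqrt qA ≤ Rnorm P x * Real.sqrt (v ⬝ᵥ v) :=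
        calc Real.sqrt qA ≤ Real.sqrt (opNorm A * (v ⬝ᵥ v)) :=
              Real.sqrt_le_sqrt (quad_le_opNorm A v)
          _ = Rnorm P x * Real.sqrt (v ⬝ᵥ v) := by
              rw [Real.sqrt_mul (show (0:ℝ) ≤ opNorm A from norm_nonneg _) (v ⬝ᵥ v)]; rfl
      have hBle : Real.sqrt qB ≤ Rnorm P y * Real.sqrt (v ⬝ᵥ v) :=
        calc Real.sqrt qB ≤ Real.sqrt (opNorm B * (v ⬝ᵥ v)) :=
              Real.sqrt_le_sqrt (quad_le_opNorm B v)
          _ = Rnorm P y * Real.sqrt (v ⬝ᵥ v) := by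
              rw [Real.sqrt_mul (show (0:ℝ) ≤ opNorm B from norm_nonneg _) (v ⬝ᵥ v)]; rfl
      have hCv : v ⬝ᵥ (P (vecMulVec (x + y) (x + y)) *ᵥ v) = qA + qM + qB := by
        rw [hC, add_mulVec, add_mulVec, dotProduct_add, dotProduct_add, hqA, hqB, hqM]
      rw [hCv]
      have hsq : (Real.sqrt qA + Real.sqrt qB) ^ 2
          = qA + 2 * Real.sqrt qA * Real.sqrt qB + qB := by
        rw [add_sq, Real.sq_sqrt hA0, Real.sq_sqrt hB0]
      calc qA + qM + qB ≤ (Real.sqrt qA + Real.sqrt qB) ^ 2 := by rw [hsq]; linarith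
        _ ≤ (Rnorm P x * Real.sqrt (v ⬝ᵥ v) + Rnorm P y * Real.sqrt (v ⬝ᵥ v)) ^ 2 := by
            apply pow_le_pow_left₀ (by positivity) (add_le_add hAle hBle)
        _ = (Rnorm P x + Rnorm P y) ^ 2 * (v ⬝ᵥ v) := by
            rw [← add_mul, mul_pow, Real.sq_sqrt (dot_self_nonneg' v)]
    have hRnn : 0 ≤ Rnorm P x + Rnorm P y :=
      add_nonneg (Real.sqrt_nonneg _) (Real.sqrt_nonneg _)
    have hop := opNorm_le_of_quad (hHerm _) (proj_quad_nonneg hA1 (x + y))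
      (by positivity) key
    calc Rnorm P (x + y) ≤ Real.sqrt ((Rnorm P x + Rnorm P y) ^ 2) := Real.sqrt_le_sqrt hop
      _ = Rnorm P x + Rnorm P y := Real.sqrt_sq hRnn
  · -- definiteness
    intro x hx
    by_contra hx0
    have hop : opNorm (P (vecMulVec x x)) = 0 :=
      (Real.sqrt_eq_zero (norm_nonneg _)).mp hx
    have hzero : P (vecMulVec x x) = 0 := by
      have h0 : Matrix.toEuclideanCLM (𝕜 := ℝ) (P (vecMulVec x x)) = 0 := by
        rwa [opNorm, norm_eq_zero] at hop
      simpa using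
        (map_eq_zero_iff _ (Matrix.toEuclideanCLM (𝕜 := ℝ) (n := Fin d)).injective).mp h0
    have hperp := hA1.proj.perp (vecMulVec x x) (P 1) (hA1.proj.mem 1)
    rw [hzero, sub_zero] at hperp
    rw [trace_vecMulVec_mul (hHerm 1)] at hperp
    have h1 : (P 1).PosDef := hA1.posdef 1 Matrix.PosDef.one
    have hpos := h1.dotProduct_mulVec_pos hx0
    rw [star_trivial] at hpos
    rw [hperp] at hpos
    exact lt_irrefl 0 hpos

end
end

section
/- Let f : ℝ^d → ℝ be convex with a minimizer x*. Let K ≥ 0, let α_k := 2/(k+2), let x̄₀ ∈ ℝ^d and x₁,…,x_{K+1} ∈ ℝ^d be arbitrary, define x̄_{k+1} := α_k x_{k+1} + (1−α_k) x̄_k for k = 0,…,K, and define f_k(x) := α_k^{−2} f(α_k x + (1−α_k) x̄_k). Then (1/4)(K+2)² ( f(x̄_{K+1}) − f(x*) ) ≤ Σ_{k=0}^K ( f_k(x_{k+1}) − f_k(x*) ). -/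
open Matrix MeasureTheory
noncomputable section

/-- Per-step estimating-sequence bound. -/
theorem momentum_key_step {d : ℕ}
    (f : (Fin d → ℝ) → ℝ) (hconv : ConvexOn ℝ Set.univ f)
    (xstar : Fin d → ℝ)
    (α : ℕ → ℝ) (hα : ∀ k, α k = 2 / ((k : ℝ) + 2))
    (x xbar : ℕ → Fin d → ℝ) (fk : ℕ → (Fin d → ℝ) → ℝ)
    (hfk : ∀ k y, fk k y = ((α k) ^ 2)⁻¹ * f (α k • y + (1 - α k) • xbar k))
    (k : ℕ) (hx : xbar (k + 1) = α k • x (k + 1) + (1 - α k) • xbar k) :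
    ((k : ℝ) + 2) ^ 2 / 4 * (f (xbar (k + 1)) - f xstar)
      - (k : ℝ) * ((k : ℝ) + 2) / 4 * (f (xbar k) - f xstar)
      ≤ fk k (x (k + 1)) - fk k xstar := by
  have hc : (0 : ℝ) < (k : ℝ) + 2 := by positivity
  have hαk : α k = 2 / ((k : ℝ) + 2) := hα k
  have ha : 0 ≤ α k := by rw [hαk]; positivity
  have hb : 0 ≤ 1 - α k := by
    rw [hαk]; rw [sub_nonneg, div_le_one hc]; linarith
  have hab : α k + (1 - α k) = 1 := by ring
  have hcv := hconv.2 (Set.mem_univ xstar) (Set.mem_univ (xbar k)) ha hb hab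
  have h1 : fk k (x (k + 1)) = ((α k) ^ 2)⁻¹ * f (xbar (k + 1)) := by
    rw [hfk, hx]
  have h2 : fk k xstar = ((α k) ^ 2)⁻¹ * f (α k • xstar + (1 - α k) • xbar k) :=
    hfk k xstar
  have hinv : ((α k) ^ 2)⁻¹ = ((k : ℝ) + 2) ^ 2 / 4 := by
    rw [hαk]; field_simp; ring
  rw [h1, h2, hinv, hαk]
  rw [hαk] at hcv
  simp only [smul_eq_mul] at hcv
  have hc2 : (0 : ℝ) < (((k : ℝ) + 2) ^ 2) / 4 := by positivity
  have := mul_le_mul_of_nonneg_left hcv (le_of_lt hc2)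
  have hexp : (((k : ℝ) + 2) ^ 2) / 4 * (2 / ((k : ℝ) + 2) * f xstar
      + (1 - 2 / ((k : ℝ) + 2)) * f (xbar k))
      = (((k : ℝ) + 2) / 2) * f xstar + ((k : ℝ) * ((k : ℝ) + 2) / 4) * f (xbar k) := by
    field_simp; ring
  rw [hexp] at this
  nlinarith [this]

/-- Lemma 7: the Nesterov-momentum estimating-sequence inequality. -/
theorem momentum_estimating_sequence {d : ℕ}
    (f : (Fin d → ℝ) → ℝ) (hconv : ConvexOn ℝ Set.univ f)
    (xstar : Fin d → ℝ) (hmin : ∀ y, f xstar ≤ f y)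
    (K : ℕ) (α : ℕ → ℝ) (hα : ∀ k, α k = 2 / ((k : ℝ) + 2))
    (x xbar : ℕ → Fin d → ℝ)
    (hxbar : ∀ k ≤ K, xbar (k + 1) = α k • x (k + 1) + (1 - α k) • xbar k)
    (fk : ℕ → (Fin d → ℝ) → ℝ)
    (hfk : ∀ k y, fk k y = ((α k) ^ 2)⁻¹ * f (α k • y + (1 - α k) • xbar k)) :
    (1 / 4) * ((K : ℝ) + 2) ^ 2 * (f (xbar (K + 1)) - f xstar) ≤
      ∑ k ∈ Finset.range (K + 1), (fk k (x (k + 1)) - fk k xstar) := by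
  induction K with
  | zero =>
    have h := momentum_key_step f hconv xstar α hα x xbar fk hfk 0
      (hxbar 0 (le_refl 0))
    have he : 0 ≤ f (xbar 0) - f xstar := by linarith [hmin (xbar 0)]
    rw [Finset.sum_range_one]
    push_cast at h ⊢
    nlinarith [h]
  | succ K ih =>
    have hxbar' : ∀ k ≤ K, xbar (k + 1) = α k • x (k + 1) + (1 - α k) • xbar k :=
      fun k hk => hxbar k (le_trans hk (Nat.le_succ K))
    have hih := ih hxbar'
    have h := momentum_key_step f hconv xstar α hα x xbar fk hfk (K + 1)
      (hxbar (K + 1) (le_refl _))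
    have he : 0 ≤ f (xbar (K + 1)) - f xstar := by linarith [hmin (xbar (K + 1))]
    rw [Finset.sum_range_succ]
    push_cast at h ⊢
    nlinarith [h, hih, he]

end
end

section
/- Let ℋ ⊆ 𝕊 satisfy Assumption (A1), let B ∈ ℋ ∩ 𝕊₊₊ satisfy BH = HB for all H ∈ ℋ, let S ∈ 𝕊₊, let δ, η > 0, and set H := η (δ I + P_ℋ(S))^{−1/2}. Then Q := H² is a minimizer over Q ∈ ℋ ∩ 𝕊₊₊ of the function Q ↦ tr(Q B S) + δ tr(B Q) − η² tr(B · log Q), where log is the operator function. -/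
open Matrix MeasureTheory
noncomputable section

section Aux
variable {d : ℕ}

namespace matFunAux

abbrev Mat (d : ℕ) := Matrix (Fin d) (Fin d) ℝ

lemma matFun_of_isHermitian {A : Mat d} (hA : A.IsHermitian) (ψ : ℝ → ℝ) :
    matFun ψ A =
      (hA.eigenvectorUnitary : Mat d) *
        Matrix.diagonal (fun i => ψ (hA.eigenvalues i)) *
        star (hA.eigenvectorUnitary : Mat d) := by
  rw [matFun, dif_pos hA]

lemma V_mul_star {A : Mat d} (hA : A.IsHermitian) :
    (hA.eigenvectorUnitary : Mat d) * star (hA.eigenvectorUnitary : Mat d) = 1 :=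
  Unitary.mul_star_self_of_mem (SetLike.coe_mem _)

lemma star_mul_V {A : Mat d} (hA : A.IsHermitian) :
    star (hA.eigenvectorUnitary : Mat d) * (hA.eigenvectorUnitary : Mat d) = 1 :=
  Unitary.star_mul_self_of_mem (SetLike.coe_mem _)

lemma matFun_isHermitian {A : Mat d} (hA : A.IsHermitian) (ψ : ℝ → ℝ) :
    (matFun ψ A).IsHermitian := by
  rw [matFun_of_isHermitian hA]
  unfold Matrix.IsHermitian
  simp only [Matrix.conjTranspose_mul, Matrix.conjTranspose_conjTranspose]
  rw [Matrix.star_eq_conjTranspose (hA.eigenvectorUnitary : Mat d),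
    Matrix.diagonal_conjTranspose]
  simp [Matrix.mul_assoc, Pi.star_def]

lemma matFun_mul {A : Mat d} (hA : A.IsHermitian) (f g : ℝ → ℝ) :
    matFun f A * matFun g A = matFun (fun t => f t * g t) A := by
  rw [matFun_of_isHermitian hA, matFun_of_isHermitian hA, matFun_of_isHermitian hA]
  have assoc : ∀ a b c e f g : Mat d, a * b * c * (e * f * g) = a * (b * (c * e) * f) * g := by
    intros; simp only [Matrix.mul_assoc]
  rw [assoc, star_mul_V hA, Matrix.mul_one, Matrix.diagonal_mul_diagonal]

lemma matFun_smul {A : Mat d} (hA : A.IsHermitian) (f : ℝ → ℝ) (c : ℝ) :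
    c • matFun f A = matFun (fun t => c * f t) A := by
  rw [matFun_of_isHermitian hA, matFun_of_isHermitian hA, ← Matrix.smul_mul, ← Matrix.mul_smul]
  congr 2
  ext i j
  rcases eq_or_ne i j with rfl | h
  · simp
  · simp [Matrix.diagonal_apply_ne _ h]

lemma matFun_congr {A : Mat d} (hA : A.IsHermitian) {f g : ℝ → ℝ}
    (h : ∀ i, f (hA.eigenvalues i) = g (hA.eigenvalues i)) :
    matFun f A = matFun g A := by
  rw [matFun_of_isHermitian hA, matFun_of_isHermitian hA]
  simp only [h]

lemma matFun_id {A : Mat d} (hA : A.IsHermitian) :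
    matFun (fun t => t) A = A := by
  rw [matFun_of_isHermitian hA]
  conv_rhs => rw [hA.spectral_theorem]
  norm_num [Function.comp_def]

lemma matFun_sq {A : Mat d} (hA : A.IsHermitian) :
    matFun (fun t => t * t) A = A * A := by
  rw [← matFun_mul hA, matFun_id hA]

lemma matFun_posDef {A : Mat d} (hA : A.IsHermitian) {f : ℝ → ℝ}
    (hf : ∀ i, 0 < f (hA.eigenvalues i)) : (matFun f A).PosDef := by
  refine Matrix.PosDef.of_dotProduct_mulVec_pos (matFun_isHermitian hA f) fun x hx => ?_
  rw [matFun_of_isHermitian hA]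
  set V : Mat d := (hA.eigenvectorUnitary : Mat d) with hV
  set y : Fin d → ℝ := star V *ᵥ x with hy
  have hxy : x = V *ᵥ y := by
    rw [hy, Matrix.mulVec_mulVec, V_mul_star hA, Matrix.one_mulVec]
  have hyne : y ≠ 0 := by
    intro h
    rw [h, Matrix.mulVec_zero] at hxy
    exact hx hxy
  have key : star x ⬝ᵥ ((V * Matrix.diagonal (fun i => f (hA.eigenvalues i)) * star V) *ᵥ x)
      = star y ⬝ᵥ (Matrix.diagonal (fun i => f (hA.eigenvalues i)) *ᵥ y) := by
    rw [← Matrix.mulVec_mulVec, ← Matrix.mulVec_mulVec, Matrix.dotProduct_mulVec (star x)]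
    congr 1
    rw [hy, Matrix.star_mulVec, Matrix.star_eq_conjTranspose V,
      Matrix.conjTranspose_conjTranspose]
  rw [key]
  exact (Matrix.PosDef.diagonal hf).dotProduct_mulVec_pos hyne

end matFunAux
end Aux
section Aux2
variable {d : ℕ}
namespace matFunAux

lemma spectral_real {A : Mat d} (hA : A.IsHermitian) :
    A = (hA.eigenvectorUnitary : Mat d) * Matrix.diagonal (fun i => hA.eigenvalues i) *
      star (hA.eigenvectorUnitary : Mat d) := by
  conv_lhs => rw [hA.spectral_theorem]
  norm_num [Function.comp_def]

lemma commute_diagonal {A : Mat d} {b : Fin d → ℝ} (f : ℝ → ℝ)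
    (h : A * Matrix.diagonal b = Matrix.diagonal b * A) :
    A * Matrix.diagonal (fun i => f (b i)) = Matrix.diagonal (fun i => f (b i)) * A := by
  ext i j
  have h' : (A * Matrix.diagonal b) i j = (Matrix.diagonal b * A) i j := by rw [h]
  rw [Matrix.mul_diagonal, Matrix.diagonal_mul] at h'
  rw [Matrix.mul_diagonal, Matrix.diagonal_mul]
  rcases eq_or_ne (A i j) 0 with h0 | h0
  · rw [h0, zero_mul, mul_zero]
  · have hb : b j = b i := by
      rw [mul_comm (b i) (A i j)] at h'
      exact mul_left_cancel₀ h0 h'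
    rw [hb, mul_comm]

lemma commute_conj_diag {V X : Mat d} (hV1 : V * star V = 1) (hV2 : star V * V = 1)
    (b : Fin d → ℝ) (f : ℝ → ℝ)
    (h : X * (V * Matrix.diagonal b * star V) = (V * Matrix.diagonal b * star V) * X) :
    X * (V * Matrix.diagonal (fun i => f (b i)) * star V)
      = (V * Matrix.diagonal (fun i => f (b i)) * star V) * X := by
  have c₁ : ∀ Z : Mat d, V * (star V * Z) = Z := by
    intro Z; rw [← Matrix.mul_assoc, hV1, Matrix.one_mul]
  have c₂ : ∀ Z : Mat d, star V * (V * Z) = Z := by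
    intro Z; rw [← Matrix.mul_assoc, hV2, Matrix.one_mul]
  have h' : (star V * X * V) * Matrix.diagonal b = Matrix.diagonal b * (star V * X * V) := by
    have h2 := congrArg (fun M => star V * M * V) h
    simpa only [Matrix.mul_assoc, c₁, c₂, hV1, hV2, Matrix.mul_one, Matrix.one_mul] using h2
  have hcf := commute_diagonal f h'
  calc X * (V * Matrix.diagonal (fun i => f (b i)) * star V)
      = V * ((star V * X * V) * Matrix.diagonal (fun i => f (b i))) * star V := by
        simp only [Matrix.mul_assoc, c₁]
    _ = V * (Matrix.diagonal (fun i => f (b i)) * (star V * X * V)) * star V := by rw [hcf]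
    _ = (V * Matrix.diagonal (fun i => f (b i)) * star V) * X := by
        simp only [Matrix.mul_assoc, c₁, c₂, hV1, hV2, Matrix.mul_one, Matrix.one_mul]

lemma commute_matFun {A X : Mat d} (hA : A.IsHermitian) (f : ℝ → ℝ)
    (h : X * A = A * X) : X * matFun f A = matFun f A * X := by
  rw [spectral_real hA] at h
  rw [matFun_of_isHermitian hA]
  exact commute_conj_diag (V_mul_star hA) (star_mul_V hA) _ f h

lemma matFun_eq_cfc {A : Mat d} (hA : A.IsHermitian) (f : ℝ → ℝ) :
    matFun f A = cfc f A := by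
  rw [Matrix.IsHermitian.cfc_eq hA, matFun_of_isHermitian hA, Matrix.IsHermitian.cfc]
  congr 1

lemma continuousOn_spectrum (f : ℝ → ℝ) (A : Mat d) : ContinuousOn f (spectrum ℝ A) :=
  (Matrix.finite_real_spectrum (A := A)).continuousOn f

lemma matFun_comp {A : Mat d} (hA : A.IsHermitian) (f g : ℝ → ℝ) :
    matFun g (matFun f A) = matFun (fun t => g (f t)) A := by
  have hfA : (matFun f A).IsHermitian := matFun_isHermitian hA f
  rw [matFun_eq_cfc hfA g, matFun_eq_cfc hA f, matFun_eq_cfc hA (fun t => g (f t))]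
  exact (cfc_comp g f A hA
    ((Set.Finite.image f (Matrix.finite_real_spectrum (A := A))).continuousOn g)
    (continuousOn_spectrum f A)).symm

end matFunAux
end Aux2
section Aux3
variable {d : ℕ}
namespace matFunAux

lemma trace_mul_diag (X : Mat d) (f : Fin d → ℝ) :
    Matrix.trace (X * Matrix.diagonal f) = ∑ i, X i i * f i := by
  rw [Matrix.trace]
  exact Finset.sum_congr rfl fun i _ => by rw [Matrix.diag_apply, Matrix.mul_diagonal]

lemma traceA (X C : Mat d) (f : Fin d → ℝ) :
    Matrix.trace (X * (C * Matrix.diagonal f * star C))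
      = ∑ i, f i * (star C * X * C) i i := by
  have h1 : X * (C * Matrix.diagonal f * star C) = (X * C * Matrix.diagonal f) * star C := by
    simp only [Matrix.mul_assoc]
  rw [h1, Matrix.trace_mul_comm, ← Matrix.mul_assoc, ← Matrix.mul_assoc, trace_mul_diag]
  exact Finset.sum_congr rfl fun i _ => by rw [mul_comm]

lemma traceD (a b : Fin d → ℝ) (X : Mat d) :
    Matrix.trace (Matrix.diagonal a * X * Matrix.diagonal b * star X)
      = ∑ j, ∑ i, a j * b i * (X j i * X j i) := by
  rw [Matrix.trace]
  refine Finset.sum_congr rfl fun j _ => ?_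
  rw [Matrix.diag_apply, Matrix.mul_apply]
  refine Finset.sum_congr rfl fun i _ => ?_
  rw [Matrix.mul_diagonal, Matrix.diagonal_mul, Matrix.star_apply, star_trivial]
  ring

lemma one_mem {ℋ : Submodule ℝ (Mat d)} {P : Mat d →ₗ[ℝ] Mat d}
    (hA1 : AssumptionA1 ℋ P) : (1 : Mat d) ∈ ℋ := by
  have h0 : (0 : Mat d) ∈ ℋ := Submodule.zero_mem _
  have hmem := hA1.funClosed 0 h0 (fun _ => 1)
  have e : matFun (fun _ => (1 : ℝ)) (0 : Mat d) = 1 := by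
    rw [matFun_of_isHermitian Matrix.isHermitian_zero]
    rw [show (fun _ : Fin d => (1:ℝ)) = fun i => (1:ℝ) from rfl]
    rw [Matrix.diagonal_one, Matrix.mul_one, V_mul_star]
  rwa [e] at hmem

lemma mul_mem_of_commute {ℋ : Submodule ℝ (Mat d)} {P : Mat d →ₗ[ℝ] Mat d}
    (hA1 : AssumptionA1 ℋ P) {A₁ A₂ : Mat d} (h1 : A₁ ∈ ℋ) (h2 : A₂ ∈ ℋ)
    (hc : A₁ * A₂ = A₂ * A₁) : A₁ * A₂ ∈ ℋ := by
  have hh1 := hA1.symm _ h1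
  have hh2 := hA1.symm _ h2
  have hsum : (A₁ + A₂).IsHermitian := hh1.add hh2
  have hmem : matFun (fun t => t * t) (A₁ + A₂) - matFun (fun t => t * t) A₁
      - matFun (fun t => t * t) A₂ ∈ ℋ :=
    sub_mem (sub_mem (hA1.funClosed _ (Submodule.add_mem _ h1 h2) _) (hA1.funClosed _ h1 _))
      (hA1.funClosed _ h2 _)
  have heq : A₁ * A₂ = (2⁻¹ : ℝ) • (matFun (fun t => t * t) (A₁ + A₂)
      - matFun (fun t => t * t) A₁ - matFun (fun t => t * t) A₂) := by
    rw [matFun_sq hsum, matFun_sq hh1, matFun_sq hh2, mul_add, add_mul, add_mul, ← hc]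
    module
  rw [heq]
  exact Submodule.smul_mem _ _ hmem

lemma klein_scalar {lam nu eta2 : ℝ} (hl : 0 < lam) (hn : 0 < nu) (he : 0 < eta2) :
    eta2 * (Real.log lam - Real.log (eta2 * nu⁻¹) + 1) ≤ nu * lam := by
  have h1 : Real.log (lam * nu / eta2) ≤ lam * nu / eta2 - 1 :=
    Real.log_le_sub_one_of_pos (by positivity)
  have h2 : Real.log (lam * nu / eta2) = Real.log lam - Real.log (eta2 * nu⁻¹) := by
    rw [Real.log_div (by positivity) he.ne', Real.log_mul hl.ne' hn.ne',
      Real.log_mul he.ne' (inv_ne_zero hn.ne'), Real.log_inv]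
    ring
  have h3 : Real.log lam - Real.log (eta2 * nu⁻¹) + 1 ≤ lam * nu / eta2 := by
    rw [← h2]; linarith
  calc eta2 * (Real.log lam - Real.log (eta2 * nu⁻¹) + 1) ≤ eta2 * (lam * nu / eta2) :=
        mul_le_mul_of_nonneg_left h3 he.le
    _ = nu * lam := by field_simp

end matFunAux
end Aux3
section Aux4
variable {d : ℕ}
namespace matFunAux

lemma matFun_const {A : Mat d} (hA : A.IsHermitian) (c : ℝ) :
    matFun (fun _ => c) A = c • (1 : Mat d) := by
  rw [matFun_of_isHermitian hA]
  have hd : Matrix.diagonal (fun _ : Fin d => c) = c • (1 : Mat d) := by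
    ext i j
    rcases eq_or_ne i j with rfl | h
    · simp
    · simp [Matrix.diagonal_apply_ne _ h, Matrix.one_apply_ne h]
  rw [hd, Matrix.mul_smul, Matrix.mul_one, Matrix.smul_mul, V_mul_star hA]

lemma trace_conj {V : Mat d} (hv2 : star V * V = 1) (Y : Mat d) :
    Matrix.trace (V * Y * star V) = Matrix.trace Y := by
  rw [Matrix.trace_mul_cycle, hv2, Matrix.one_mul]

lemma smul_one_posDef {ε : ℝ} (hε : 0 < ε) : ((ε • (1 : Mat d)) : Mat d).PosDef := by
  have h : (ε • (1 : Mat d)) = Matrix.diagonal (fun _ => ε) := by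
    ext i j
    rcases eq_or_ne i j with rfl | h
    · simp
    · simp [Matrix.one_apply_ne h, Matrix.diagonal_apply_ne _ h]
  rw [h]
  exact Matrix.PosDef.diagonal fun _ => hε

end matFunAux
end Aux4

open matFunAux

/-- Lemma 8: under commutation, `H²` minimizes the log-potential objective
`Q ↦ tr(Q B S) + δ tr(B Q) − η² tr(B log Q)` over `ℋ ∩ 𝕊₊₊`. -/
theorem Hsq_minimizes_log_potential {d : ℕ}
    (ℋ : Submodule ℝ (Matrix (Fin d) (Fin d) ℝ))
    (P : Matrix (Fin d) (Fin d) ℝ →ₗ[ℝ] Matrix (Fin d) (Fin d) ℝ)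
    (hA1 : AssumptionA1 ℋ P)
    (B : Matrix (Fin d) (Fin d) ℝ) (hBmem : B ∈ ℋ) (hBpd : B.PosDef)
    (hBcomm : ∀ A ∈ ℋ, B * A = A * B)
    (S : Matrix (Fin d) (Fin d) ℝ) (hS : S.PosSemidef)
    (δ η : ℝ) (hδ : 0 < δ) (hη : 0 < η)
    (H : Matrix (Fin d) (Fin d) ℝ)
    (hH : H = η • matFun (fun t => t ^ (-(1 / 2) : ℝ))
      (δ • (1 : Matrix (Fin d) (Fin d) ℝ) + P S)) :
    H * H ∈ ℋ ∧ (H * H).PosDef ∧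
    ∀ Q ∈ ℋ, Q.PosDef →
      Matrix.trace (H * H * B * S) + δ * Matrix.trace (B * (H * H)) -
          η ^ 2 * Matrix.trace (B * matFun Real.log (H * H)) ≤
        Matrix.trace (Q * B * S) + δ * Matrix.trace (B * Q) -
          η ^ 2 * Matrix.trace (B * matFun Real.log Q) := by
  set M : Mat d := δ • (1 : Mat d) + P S with hMdef
  -- basic facts about M
  have hPS_mem : P S ∈ ℋ := hA1.proj.mem S
  have hPS_psd : (P S).PosSemidef := by
    refine Matrix.PosSemidef.of_dotProduct_mulVec_nonneg (hA1.symm _ hPS_mem) fun x => ?_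
    have key : ∀ ε : ℝ, 0 < ε →
        0 ≤ star x ⬝ᵥ ((P S) *ᵥ x) + ε * (star x ⬝ᵥ ((P 1) *ᵥ x)) := by
      intro ε hε
      have hpd : (P (S + ε • 1)).PosDef :=
        hA1.posdef _ (Matrix.PosDef.posSemidef_add hS (smul_one_posDef hε))
      have h2 := hpd.posSemidef.dotProduct_mulVec_nonneg x
      rw [map_add, LinearMap.map_smul, Matrix.add_mulVec, dotProduct_add,
        Matrix.smul_mulVec, dotProduct_smul, smul_eq_mul] at h2
      exact h2
    rcases le_or_gt 0 (star x ⬝ᵥ ((P S) *ᵥ x)) with h | h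
    · exact h
    · exfalso
      set q := star x ⬝ᵥ ((P S) *ᵥ x) with hq
      set c := star x ⬝ᵥ ((P 1) *ᵥ x) with hc
      rcases le_or_gt c 0 with hc0 | hc0
      · nlinarith [key 1 one_pos]
      · have hεpos : (0:ℝ) < -q / (2 * c) := div_pos (by linarith) (by linarith)
        have hval : q + (-q / (2 * c)) * c = q / 2 := by field_simp; ring
        nlinarith [key (-q / (2 * c)) hεpos]
  have hMpd : M.PosDef := Matrix.PosDef.add_posSemidef (smul_one_posDef hδ) hPS_psd
  have hM : M.IsHermitian := hMpd.1
  have hMmem : M ∈ ℋ := Submodule.add_mem _ (Submodule.smul_mem _ _ (one_mem hA1)) hPS_mem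
  -- H * H = matFun g M
  set g : ℝ → ℝ := fun t => η ^ 2 * t⁻¹ with hgdef
  have hHH : H * H = matFun g M := by
    rw [hH, Matrix.smul_mul, Matrix.mul_smul, smul_smul,
      matFun_mul hM, matFun_smul hM]
    refine matFun_congr hM fun j => ?_
    have hj := hMpd.eigenvalues_pos j
    have hrw : (hM.eigenvalues j) ^ (-(1/2) : ℝ) * (hM.eigenvalues j) ^ (-(1/2) : ℝ)
        = (hM.eigenvalues j)⁻¹ := by
      rw [← Real.rpow_add hj, show (-(1/2) + -(1/2) : ℝ) = -1 by norm_num,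
        Real.rpow_neg_one]
    rw [hrw, hgdef]
    ring
  have hQ0mem : H * H ∈ ℋ := by rw [hHH]; exact hA1.funClosed M hMmem g
  have hQ0pd : (H * H).PosDef := by
    rw [hHH]
    refine matFun_posDef hM fun j => ?_
    have := hMpd.eigenvalues_pos j
    rw [hgdef]
    positivity
  refine ⟨hQ0mem, hQ0pd, ?_⟩
  intro Q hQmem hQpd
  -- reduction of the linear part
  have reduce : ∀ Q' ∈ ℋ, Matrix.trace (Q' * B * S) + δ * Matrix.trace (B * Q')
      = Matrix.trace (M * (B * Q')) := by
    intro Q' hQ'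
    have hBQ'comm : B * Q' = Q' * B := hBcomm Q' hQ'
    have hBQ'mem : B * Q' ∈ ℋ := mul_mem_of_commute hA1 hBmem hQ' hBQ'comm
    have htr1 : Matrix.trace (Q' * B * S) = Matrix.trace (P S * (B * Q')) := by
      rw [Matrix.trace_mul_cycle, Matrix.mul_assoc, ← hBQ'comm]
      have hperp := hA1.proj.perp S (B * Q') hBQ'mem
      rw [Matrix.sub_mul, Matrix.trace_sub, sub_eq_zero] at hperp
      exact hperp
    rw [htr1, hMdef, Matrix.add_mul, Matrix.trace_add, Matrix.smul_mul, Matrix.one_mul,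
      Matrix.trace_smul, smul_eq_mul]
    ring
  -- trace (M * (B * (H*H))) = η² trace B
  have hQ0M : (H * H) * M = (η ^ 2 : ℝ) • (1 : Mat d) := by
    have key : matFun g M * matFun (fun t => t) M = (η ^ 2 : ℝ) • (1 : Mat d) := by
      rw [matFun_mul hM,
        matFun_congr hM (g := fun _ => η ^ 2) fun j => by
          have hj := hMpd.eigenvalues_pos j
          simp only [hgdef]
          field_simp,
        matFun_const hM]
    rw [matFun_id hM] at key
    rw [hHH]
    exact key
  have htrQ0 : Matrix.trace (M * (B * (H * H))) = η ^ 2 * Matrix.trace B := by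
    rw [Matrix.trace_mul_comm, Matrix.mul_assoc, hQ0M, Matrix.mul_smul, Matrix.mul_one,
      Matrix.trace_smul, smul_eq_mul]
  -- log of H*H
  have hlogQ0 : matFun Real.log (H * H) = matFun (fun t => Real.log (g t)) M := by
    rw [hHH, matFun_comp hM]
  -- square root of B
  have hBherm : B.IsHermitian := hBpd.1
  set R : Mat d := matFun Real.sqrt B with hRdef
  have hRherm : R.IsHermitian := matFun_isHermitian hBherm _
  have hRR : R * R = B := by
    rw [hRdef, matFun_mul hBherm,
      matFun_congr hBherm (g := fun t => t) fun i =>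
        Real.mul_self_sqrt (hBpd.eigenvalues_pos i).le,
      matFun_id hBherm]
  have hRQ : Q * R = R * Q := commute_matFun hBherm Real.sqrt (hBcomm Q hQmem).symm
  -- spectral data of M and Q, made opaque
  obtain ⟨V, ν, hv1, hv2, hMdiag, hν, hfunM⟩ :
      ∃ (V : Mat d) (ν : Fin d → ℝ), V * star V = 1 ∧ star V * V = 1 ∧
        M = V * Matrix.diagonal ν * star V ∧ (∀ j, 0 < ν j) ∧
        ∀ f : ℝ → ℝ, matFun f M = V * Matrix.diagonal (fun j => f (ν j)) * star V :=
    ⟨_, _, V_mul_star hM, star_mul_V hM, spectral_real hM,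
      fun j => hMpd.eigenvalues_pos j, fun f => matFun_of_isHermitian hM f⟩
  have hQherm : Q.IsHermitian := hQpd.1
  obtain ⟨C, lam, hc1, hc2, hQdiag, hlam, hfunQ⟩ :
      ∃ (C : Mat d) (lam : Fin d → ℝ), C * star C = 1 ∧ star C * C = 1 ∧
        Q = C * Matrix.diagonal lam * star C ∧ (∀ i, 0 < lam i) ∧
        ∀ f : ℝ → ℝ, matFun f Q = C * Matrix.diagonal (fun i => f (lam i)) * star C :=
    ⟨_, _, V_mul_star hQherm, star_mul_V hQherm, spectral_real hQherm,
      fun i => hQpd.eigenvalues_pos i, fun f => matFun_of_isHermitian hQherm f⟩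
  -- cancellation helpers
  have hVc : ∀ Z : Mat d, V * (star V * Z) = Z := fun Z => by
    rw [← Matrix.mul_assoc, hv1, Matrix.one_mul]
  have hVc' : ∀ Z : Mat d, star V * (V * Z) = Z := fun Z => by
    rw [← Matrix.mul_assoc, hv2, Matrix.one_mul]
  have hCc : ∀ Z : Mat d, C * (star C * Z) = Z := fun Z => by
    rw [← Matrix.mul_assoc, hc1, Matrix.one_mul]
  have hCc' : ∀ Z : Mat d, star C * (C * Z) = Z := fun Z => by
    rw [← Matrix.mul_assoc, hc2, Matrix.one_mul]
  set T : Mat d := star V * R * C with hTdef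
  have hstarT : star T = star C * R * V := by
    rw [hTdef, StarMul.star_mul, StarMul.star_mul, star_star]
    rw [Matrix.star_eq_conjTranspose R, hRherm]
    simp only [Matrix.mul_assoc]
  have hTT1 : star T * T = star C * B * C := by
    rw [hstarT, hTdef, ← hRR]
    simp only [Matrix.mul_assoc, hVc, hVc', hCc, hCc', hv1, hv2, hc1, hc2,
      Matrix.mul_one, Matrix.one_mul]
  have hTT2 : T * star T = star V * B * V := by
    rw [hstarT, hTdef, ← hRR]
    simp only [Matrix.mul_assoc, hVc, hVc', hCc, hCc', hv1, hv2, hc1, hc2,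
      Matrix.mul_one, Matrix.one_mul]
  have hentryC : ∀ i, (star C * B * C) i i = ∑ j, T j i * T j i := by
    intro i
    rw [← hTT1, Matrix.mul_apply]
    exact Finset.sum_congr rfl fun j _ => by rw [Matrix.star_apply, star_trivial]
  have hentryV : ∀ j, (star V * B * V) j j = ∑ i, T j i * T j i := by
    intro j
    rw [← hTT2, Matrix.mul_apply]
    exact Finset.sum_congr rfl fun i _ => by rw [Matrix.star_apply, star_trivial]
  -- the four trace formulas
  have hS1 : Matrix.trace (B * matFun Real.log Q)
      = ∑ j, ∑ i, Real.log (lam i) * (T j i * T j i) := by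
    rw [hfunQ Real.log, traceA]
    calc ∑ i, Real.log (lam i) * (star C * B * C) i i
        = ∑ i, ∑ j, Real.log (lam i) * (T j i * T j i) := by
          refine Finset.sum_congr rfl fun i _ => ?_
          rw [hentryC i, Finset.mul_sum]
      _ = ∑ j, ∑ i, Real.log (lam i) * (T j i * T j i) := Finset.sum_comm
  have hS2 : Matrix.trace (B * matFun (fun t => Real.log (g t)) M)
      = ∑ j, ∑ i, Real.log (η ^ 2 * (ν j)⁻¹) * (T j i * T j i) := by
    rw [hfunM (fun t => Real.log (g t)), traceA]
    refine Finset.sum_congr rfl fun j _ => ?_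
    rw [hentryV j, Finset.mul_sum, hgdef]
  have hS3 : Matrix.trace B = ∑ j, ∑ i, T j i * T j i := by
    have e1 : Matrix.trace (star C * B * C) = Matrix.trace B := by
      rw [Matrix.trace_mul_cycle, hc1, Matrix.one_mul]
    rw [← e1, Matrix.trace]
    calc ∑ i, (star C * B * C).diag i = ∑ i, ∑ j, T j i * T j i := by
          refine Finset.sum_congr rfl fun i _ => ?_
          rw [Matrix.diag_apply, hentryC i]
      _ = ∑ j, ∑ i, T j i * T j i := Finset.sum_comm
  have hS4 : Matrix.trace (M * (B * Q))
      = ∑ j, ∑ i, ν j * lam i * (T j i * T j i) := by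
    have step1 : M * (B * Q) = M * (R * (Q * R)) := by
      rw [hBcomm Q hQmem, ← hRR,
        (show R * (Q * R) = Q * (R * R) by rw [← Matrix.mul_assoc R Q R, ← hRQ, Matrix.mul_assoc]).symm]
    have step2 : M * (R * (Q * R))
        = V * (Matrix.diagonal ν * T * Matrix.diagonal lam * star T) * star V := by
      rw [hMdiag, hQdiag, hstarT, hTdef]
      simp only [Matrix.mul_assoc, hVc, hVc', hCc, hCc', hv1, hv2, hc1, hc2,
        Matrix.mul_one, Matrix.one_mul]
    calc Matrix.trace (M * (B * Q))
        = Matrix.trace (V * (Matrix.diagonal ν * T * Matrix.diagonal lam * star T)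
            * star V) := by rw [step1, step2]
      _ = Matrix.trace (Matrix.diagonal ν * T * Matrix.diagonal lam * star T) :=
          trace_conj hv2 _
      _ = ∑ j, ∑ i, ν j * lam i * (T j i * T j i) := traceD ν lam T
  -- final assembly
  rw [reduce _ hQ0mem, reduce _ hQmem, htrQ0, hlogQ0, hS1, hS2, hS4, hS3]
  rw [sub_le_sub_iff]
  simp only [Finset.mul_sum]
  rw [← Finset.sum_add_distrib, ← Finset.sum_add_distrib]
  refine Finset.sum_le_sum fun j _ => ?_
  rw [← Finset.sum_add_distrib, ← Finset.sum_add_distrib]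
  refine Finset.sum_le_sum fun i _ => ?_
  have hk := klein_scalar (hlam i) (hν j) (by positivity : (0:ℝ) < η ^ 2)
  nlinarith [mul_le_mul_of_nonneg_right hk (mul_self_nonneg (T j i))]

end
end
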